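/- arXiv:1805.08026 — 9 statements merged into one kernel-verified Lean document; each statement's English description precedes it below -/
import Mathlib

section
/- For a finite joint distribution p where the marginal p_A is uniform on A, V_2(A;B) ≤ √(|A|/2) · Σ_{a,b} |p(a,b) − p(a)p(b)|. -/
open Finset

/-!
With `p(a) = 1/|A|`, the `b`-th summand of `V_2` is `√(|A| · Σ_a x_a²)` for the deviations
`x_a = p(a,b) − p(b)/|A|`, which sum to zero over `a`. A vector with zero sum has each
`|x_a| ≤ ‖x‖₁ / 2`, since `x_a` is minus the sum of the other entries; hence
`Σ_a x_a² ≤ ‖x‖₁² / 2`. Taking square roots and summing over `b` gives the bound.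
-/

section ZeroSum

variable {ι : Type*} {s : Finset ι} {x : ι → ℝ}

theorem two_mul_abs_le_sum_abs_of_sum_eq_zero (hx : ∑ j ∈ s, x j = 0) {i : ι} (hi : i ∈ s) :
    2 * |x i| ≤ ∑ j ∈ s, |x j| := by
  classical
  have hsplit := add_sum_erase s x hi
  have habs_split := add_sum_erase s (fun j => |x j|) hi
  have hrest : |x i| ≤ ∑ j ∈ s.erase i, |x j| := by
    calc |x i| = |∑ j ∈ s.erase i, x j| := by
          rw [← abs_neg, show -x i = ∑ j ∈ s.erase i, x j by linarith]
      _ ≤ ∑ j ∈ s.erase i, |x j| := abs_sum_le_sum_abs _ _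
  linarith

theorem sum_sq_le_half_sq_sum_abs_of_sum_eq_zero (hx : ∑ j ∈ s, x j = 0) :
    ∑ j ∈ s, x j ^ 2 ≤ (∑ j ∈ s, |x j|) ^ 2 / 2 := by
  calc ∑ j ∈ s, x j ^ 2 = ∑ j ∈ s, |x j| * |x j| := by simp only [abs_mul_abs_self, sq]
    _ ≤ ∑ j ∈ s, (∑ k ∈ s, |x k|) / 2 * |x j| := by
        gcongr with j hj
        linarith [two_mul_abs_le_sum_abs_of_sum_eq_zero hx hj]
    _ = (∑ j ∈ s, |x j|) ^ 2 / 2 := by rw [← mul_sum]; ring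

theorem sqrt_mul_sum_sq_le_of_sum_eq_zero (hx : ∑ j ∈ s, x j = 0) {c : ℝ} (hc : 0 ≤ c) :
    √(c * ∑ j ∈ s, x j ^ 2) ≤ √(c / 2) * ∑ j ∈ s, |x j| := by
  calc √(c * ∑ j ∈ s, x j ^ 2) ≤ √(c * ((∑ j ∈ s, |x j|) ^ 2 / 2)) := by
        gcongr
        exact sum_sq_le_half_sq_sum_abs_of_sum_eq_zero hx
    _ = √(c / 2) * ∑ j ∈ s, |x j| := by
        rw [show c * ((∑ j ∈ s, |x j|) ^ 2 / 2) = c / 2 * (∑ j ∈ s, |x j|) ^ 2 by ring,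
          Real.sqrt_mul (by positivity), Real.sqrt_sq (sum_nonneg fun j _ => abs_nonneg _)]

end ZeroSum

theorem sum_sub_inv_card_mul_sum_eq_zero {ι : Type*} [Fintype ι] [Nonempty ι] (x : ι → ℝ) :
    ∑ i, (x i - (Fintype.card ι : ℝ)⁻¹ * ∑ j, x j) = 0 := by
  rw [sum_sub_distrib, sum_const, card_univ, nsmul_eq_mul, ← mul_assoc,
    mul_inv_cancel₀ (by positivity), one_mul, sub_self]

theorem stmt_5_general {A B : Type*} [Fintype A] [Fintype B]
    (p : A → B → ℝ)
    (huni : ∀ a, ∑ b, p a b = (Fintype.card A : ℝ)⁻¹) :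
    (∑ b, (∑ a, (∑ b', p a b') *
        (p a b / (∑ b', p a b') - ∑ a', p a' b) ^ 2) ^ ((1:ℝ)/2)) ≤
      Real.sqrt ((Fintype.card A : ℝ) / 2) *
        ∑ a, ∑ b, |p a b - (∑ b', p a b') * (∑ a', p a' b)| := by
  rcases isEmpty_or_nonempty A with hA | hA
  · simp
  set c : ℝ := (Fintype.card A : ℝ)
  have hc : 0 < c := by positivity
  simp_rw [huni]
  rw [sum_comm, mul_sum]
  refine sum_le_sum fun b _ => ?_
  have hchi : ∑ a, c⁻¹ * (p a b / c⁻¹ - ∑ a', p a' b) ^ 2 =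
      c * ∑ a, (p a b - c⁻¹ * ∑ a', p a' b) ^ 2 := by
    rw [mul_sum]
    refine sum_congr rfl fun a _ => ?_
    field_simp
  rw [hchi, ← Real.sqrt_eq_rpow]
  exact sqrt_mul_sum_sq_le_of_sum_eq_zero
    (sum_sub_inv_card_mul_sum_eq_zero (p · b)) hc.le

/-- If the marginal `p_A` is uniform then
`V_2(A;B) ≤ √(|A|/2) · Σ_{a,b} |p(a,b) − p(a)p(b)|`. -/
theorem stmt_5 {A B : Type*} [Fintype A] [Fintype B]
    (p : A → B → ℝ) (hp : ∀ a b, 0 ≤ p a b)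
    (hsum : ∑ a, ∑ b, p a b = 1)
    (huni : ∀ a, ∑ b, p a b = (Fintype.card A : ℝ)⁻¹) :
    (∑ b, (∑ a, (∑ b', p a b') *
        (p a b / (∑ b', p a b') - ∑ a', p a' b) ^ 2) ^ ((1:ℝ)/2)) ≤
      Real.sqrt ((Fintype.card A : ℝ) / 2) *
        ∑ a, ∑ b, |p a b - (∑ b', p a b') * (∑ a', p a' b)| :=
  stmt_5_general p huni
end

section
/- Data processing for V_2 on the B side: if A, B, C are finite sets, p_{AB} is a joint distribution, and C is obtained from B by a channel w(c|b) (so p(a,c) = Σ_b p(a,b)w(c|b)), then V_2(A;C) ≤ V_2(A;B). -/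
/-!
For fixed `c`, the vector `(p(c|a) - p(c))_a` is the combination `∑_b w(c|b) (p(b|a) - p(b))_a`.
Measured in the `ℓ²` norm weighted by `p(a)`, i.e. the Euclidean norm after scaling coordinate `a`
by `√p(a)`, the triangle inequality bounds each term of `V_2(A;C)` by `∑_b w(c|b) ‖·‖`, and summing
over `c` uses `∑_c w(c|b) = 1`.
-/

open Finset

theorem sum_norm_sum_smul_le {B C E : Type*} [Fintype B] [Fintype C] [SeminormedAddCommGroup E]
    [NormedSpace ℝ E] {w : B → C → ℝ} (hw : ∀ b c, 0 ≤ w b c) (hw1 : ∀ b, ∑ c, w b c = 1)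
    (F : B → E) : ∑ c, ‖∑ b, w b c • F b‖ ≤ ∑ b, ‖F b‖ :=
  calc ∑ c, ‖∑ b, w b c • F b‖ ≤ ∑ c, ∑ b, w b c * ‖F b‖ := by
        gcongr with c
        refine (norm_sum_le _ _).trans_eq (sum_congr rfl fun b _ => ?_)
        rw [norm_smul, Real.norm_of_nonneg (hw b c)]
    _ = ∑ b, ‖F b‖ := by
        rw [sum_comm]
        simp only [← sum_mul, hw1, one_mul]

theorem sum_comp_channel {A B X : Type*} [Fintype B] [Fintype X] (p : A → B → ℝ)
    {w : B → X → ℝ} (hw1 : ∀ b, ∑ x, w b x = 1) (a : A) :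
    ∑ x, ∑ b, p a b * w b x = ∑ b, p a b := by
  rw [sum_comm]
  simp only [← mul_sum, hw1, mul_one]

section V2

variable {A B X : Type*} [Fintype A] [Fintype B] [Fintype X]

/-- `V_2(A;X)` of an unnormalised joint weight `q`, with `q(a) = ∑ x, q a x`,
`q(x|a) = q a x / q(a)` and `q(x) = ∑ a, q a x`. -/
noncomputable def V2 (q : A → X → ℝ) : ℝ :=
  ∑ x, (∑ a, (∑ x', q a x') * (q a x / ∑ x', q a x' - ∑ a', q a' x) ^ 2) ^ ((1:ℝ)/2)

noncomputable def V2.deviation (q : A → X → ℝ) (x : X) : A → ℝ :=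
  fun a => q a x / ∑ x', q a x' - ∑ a', q a' x

noncomputable def sqrtWeight (μ : A → ℝ) : (A → ℝ) →ₗ[ℝ] EuclideanSpace ℝ A :=
  (WithLp.linearEquiv 2 ℝ (A → ℝ)).symm.toLinearMap ∘ₗ
    LinearMap.pi fun a => √(μ a) • LinearMap.proj a

theorem norm_sqrtWeight {μ : A → ℝ} (hμ : ∀ a, 0 ≤ μ a) (f : A → ℝ) :
    ‖sqrtWeight μ f‖ = (∑ a, μ a * f a ^ 2) ^ ((1:ℝ)/2) := by
  rw [EuclideanSpace.norm_eq, ← Real.sqrt_eq_rpow]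
  congr 1
  refine sum_congr rfl fun a _ => ?_
  simp [sqrtWeight, mul_pow, Real.sq_sqrt (hμ a)]

theorem V2_eq_sum_norm (q : A → X → ℝ) (hq : ∀ a, 0 ≤ ∑ x, q a x) :
    V2 q = ∑ x, ‖sqrtWeight (fun a => ∑ x', q a x') (V2.deviation q x)‖ := by
  simp only [norm_sqrtWeight hq]
  rfl

theorem V2.deviation_comp_channel (p : A → B → ℝ) {w : B → X → ℝ} (hw1 : ∀ b, ∑ x, w b x = 1)
    (x : X) :
    V2.deviation (fun a x => ∑ b, p a b * w b x) x = ∑ b, w b x • V2.deviation p b := by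
  ext a
  simp only [V2.deviation, sum_comp_channel p hw1, Finset.sum_apply, Pi.smul_apply, smul_eq_mul,
    mul_sub, sum_sub_distrib, sum_div, mul_sum]
  rw [sum_comm (f := fun a' b => p a' b * w b x)]
  congr 1 <;> refine sum_congr rfl fun b _ => ?_
  · ring
  · exact sum_congr rfl fun _ _ => mul_comm _ _

end V2

theorem stmt_6_general {A B C : Type*} [Fintype A] [Fintype B] [Fintype C]
    (p : A → B → ℝ) (hp : ∀ a b, 0 ≤ p a b)
    (w : B → C → ℝ) (hw : ∀ b c, 0 ≤ w b c) (hw1 : ∀ b, ∑ c, w b c = 1) :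
    (∑ c, (∑ a, (∑ c', ∑ b, p a b * w b c') *
        ((∑ b, p a b * w b c) / (∑ c', ∑ b, p a b * w b c') -
          ∑ a', ∑ b, p a' b * w b c) ^ 2) ^ ((1:ℝ)/2)) ≤
      ∑ b, (∑ a, (∑ b', p a b') *
        (p a b / (∑ b', p a b') - ∑ a', p a' b) ^ 2) ^ ((1:ℝ)/2) := by
  show V2 (fun a c => ∑ b, p a b * w b c) ≤ V2 p
  have hpA : ∀ a, 0 ≤ ∑ b, p a b := fun a => sum_nonneg fun b _ => hp a b
  have hpAC : ∀ a, 0 ≤ ∑ c, ∑ b, p a b * w b c := fun a => sum_comp_channel p hw1 a ▸ hpA a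
  rw [V2_eq_sum_norm _ hpAC, V2_eq_sum_norm p hpA]
  simp only [sum_comp_channel p hw1, V2.deviation_comp_channel p hw1, map_sum, map_smul]
  exact sum_norm_sum_smul_le hw hw1 _

/-- Data processing for `V_2` on the `B` side: if `C` is obtained from `B` by a channel
`w(c|b)`, i.e. `p(a,c) = Σ_b p(a,b) w(c|b)`, then `V_2(A;C) ≤ V_2(A;B)`. -/
theorem stmt_6 {A B C : Type*} [Fintype A] [Fintype B] [Fintype C]
    (p : A → B → ℝ) (hp : ∀ a b, 0 ≤ p a b)
    (hsum : ∑ a, ∑ b, p a b = 1)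
    (w : B → C → ℝ) (hw : ∀ b c, 0 ≤ w b c) (hw1 : ∀ b, ∑ c, w b c = 1) :
    (∑ c, (∑ a, (∑ c', ∑ b, p a b * w b c') *
        ((∑ b, p a b * w b c) / (∑ c', ∑ b, p a b * w b c') -
          ∑ a', ∑ b, p a' b * w b c) ^ 2) ^ ((1:ℝ)/2)) ≤
      ∑ b, (∑ a, (∑ b', p a b') *
        (p a b / (∑ b', p a b') - ∑ a', p a' b) ^ 2) ^ ((1:ℝ)/2) :=
  stmt_6_general p hp w hw hw1
end

section
/- Data processing for V_α on the A side: if X is obtained from A by a channel v(x|a) that preserves the marginal trivially, then for the classical quantity V_α with α ≥ 1, V_α(X;B) ≤ V_α(A;B) whenever p(x,b) = Σ_a p(a,b)v(x|a) and additionally the channel v is deterministic, i.e., X = f(A) for a function f: A → X. -/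
/-!
For each `b`, the conditional probability `p(b|x) - p(b)` is the `p(a|x)`-weighted average of
`p(b|a) - p(b)` over the fibre `f a = x`, so Jensen's inequality for the convex function
`t ↦ |t - p(b)| ^ α` bounds each summand of `V_α(X;B)` fibrewise by the corresponding summands of
`V_α(A;B)`; monotonicity of `t ↦ t ^ (1/α)` finishes the proof.
-/

open Finset

theorem convexOn_abs_sub_rpow {α : ℝ} (hα : 1 ≤ α) (c : ℝ) :
    ConvexOn ℝ Set.univ (fun t : ℝ => |t - c| ^ α) := by
  have habs : ConvexOn ℝ Set.univ (fun t : ℝ => |t - c|) := by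
    simpa [Function.comp_def, neg_add_eq_sub] using
      (convexOn_univ_norm (E := ℝ)).translate_right (-c)
  have himg : (fun t : ℝ => |t - c|) '' Set.univ = Set.Ici 0 :=
    Set.eq_of_subset_of_subset (by rintro _ ⟨t, -, rfl⟩; exact abs_nonneg (t - c))
      fun y (hy : 0 ≤ y) => ⟨y + c, trivial, by simpa using abs_of_nonneg hy⟩
  refine ConvexOn.comp (g := fun t : ℝ => t ^ α) ?_ habs ?_
  · rw [himg]; exact convexOn_rpow hα
  · rw [himg]
    exact fun x hx y _ hxy => Real.rpow_le_rpow hx hxy (zero_le_one.trans hα)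

theorem ConvexOn.sum_mul_map_div_le {ι : Type*} {φ : ℝ → ℝ} (hφ : ConvexOn ℝ Set.univ φ)
    (s : Finset ι) {g h : ι → ℝ} (hg : ∀ i ∈ s, 0 ≤ g i) (hgh : ∀ i ∈ s, g i = 0 → h i = 0) :
    (∑ i ∈ s, g i) * φ ((∑ i ∈ s, h i) / ∑ i ∈ s, g i) ≤ ∑ i ∈ s, g i * φ (h i / g i) := by
  rcases (sum_nonneg hg).eq_or_lt with hzero | hpos
  · have hg0 := (sum_eq_zero_iff_of_nonneg hg).1 hzero.symm
    rw [← hzero, zero_mul, sum_eq_zero fun i hi => by rw [hg0 i hi, zero_mul]]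
  have hcenter : s.centerMass g (fun i => h i / g i) = (∑ i ∈ s, h i) / ∑ i ∈ s, g i := by
    rw [centerMass, inv_smul_eq_iff₀ hpos.ne', smul_eq_mul, mul_div_cancel₀ _ hpos.ne']
    refine sum_congr rfl fun i hi => ?_
    rcases eq_or_ne (g i) 0 with hgi | hgi
    · simp [hgi, hgh i hi hgi]
    · exact mul_div_cancel₀ _ hgi
  have hjensen := hφ.map_centerMass_le hg hpos fun i _ => Set.mem_univ (h i / g i)
  rw [hcenter, centerMass, smul_eq_mul, ← div_eq_inv_mul, le_div_iff₀' hpos] at hjensen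
  simpa using hjensen

theorem ConvexOn.sum_fiberwise_mul_map_div_le {ι κ : Type*} [Fintype ι] [Fintype κ]
    [DecidableEq κ] {φ : ℝ → ℝ} (hφ : ConvexOn ℝ Set.univ φ) (f : ι → κ) {g h : ι → ℝ}
    (hg : ∀ i, 0 ≤ g i) (hgh : ∀ i, g i = 0 → h i = 0) :
    ∑ x, (∑ i with f i = x, g i) * φ ((∑ i with f i = x, h i) / ∑ i with f i = x, g i) ≤
      ∑ i, g i * φ (h i / g i) := by
  rw [← sum_fiberwise univ f]
  exact sum_le_sum fun x _ => hφ.sum_mul_map_div_le _ (fun i _ => hg i) (fun i _ => hgh i)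

theorem stmt_7_general {A B X : Type*} [Fintype A] [Fintype B] [Fintype X] [DecidableEq X]
    (p : A → B → ℝ) (hp : ∀ a b, 0 ≤ p a b)
    (f : A → X) (α : ℝ) (hα : 1 ≤ α) :
    (∑ b, (∑ x, (∑ b', ∑ a, if f a = x then p a b' else 0) *
        |(∑ a, if f a = x then p a b else 0) /
            (∑ b', ∑ a, if f a = x then p a b' else 0) - ∑ a', p a' b| ^ α) ^ (1/α)) ≤
      ∑ b, (∑ a, (∑ b', p a b') *
        |p a b / (∑ b', p a b') - ∑ a', p a' b| ^ α) ^ (1/α) := by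
  have hmarg : ∀ x, (∑ b', ∑ a, if f a = x then p a b' else 0) = ∑ a with f a = x, ∑ b', p a b' :=
    fun x => by simp only [← sum_filter]; exact sum_comm
  simp only [hmarg]
  simp only [← sum_filter]
  have hrow : ∀ a, 0 ≤ ∑ b', p a b' := fun a => sum_nonneg fun b' _ => hp a b'
  refine sum_le_sum fun b _ => Real.rpow_le_rpow ?_ ?_ (by positivity)
  · exact sum_nonneg fun x _ =>
      mul_nonneg (sum_nonneg fun a _ => hrow a) (Real.rpow_nonneg (abs_nonneg _) _)
  · refine (convexOn_abs_sub_rpow hα _).sum_fiberwise_mul_map_div_le f hrow fun a ha => ?_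
    exact le_antisymm (ha ▸ single_le_sum (fun b' _ => hp a b') (mem_univ b)) (hp a b)

/-- Data processing for `V_α` on the `A` side under a deterministic map `X = f(A)`:
with `q(x,b) = Σ_{a : f(a)=x} p(a,b)` one has `V_α(X;B) ≤ V_α(A;B)` for `α ≥ 1`. -/
theorem stmt_7 {A B X : Type*} [Fintype A] [Fintype B] [Fintype X] [DecidableEq X]
    (p : A → B → ℝ) (hp : ∀ a b, 0 ≤ p a b)
    (hsum : ∑ a, ∑ b, p a b = 1)
    (f : A → X) (α : ℝ) (hα : 1 ≤ α) :
    (∑ b, (∑ x, (∑ b', ∑ a, if f a = x then p a b' else 0) *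
        |(∑ a, if f a = x then p a b else 0) /
            (∑ b', ∑ a, if f a = x then p a b' else 0) - ∑ a', p a' b| ^ α) ^ (1/α)) ≤
      ∑ b, (∑ a, (∑ b', p a b') *
        |p a b / (∑ b', p a b') - ∑ a', p a' b| ^ α) ^ (1/α) :=
  stmt_7_general p hp f α hα
end

section
/- Classical decoupling at α = 2 (second-moment step): let A = A₀ × C and B be finite sets, p_{AB} a joint distribution, and let f be a uniformly random |C|-to-1 function from A to A₀ constructed as f(a) = π₀(a) for a uniformly random permutation π of A = A₀ × C (π₀ being the first coordinate). For a classical distribution define W_2(A|B)_p = inf over distributions σ_B of (Σ_{a,b} σ(b)^{-1}(p(a,b) − p(b)/|A|)²)^{1/2}. Then for the joint distribution q^f(a₀,b) = Σ_{a: f(a)=a₀} p(a,b), E_f[W_2(A₀|B)_{q^f}] ≤ 2·W_2(A|B)_p. -/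
open Finset

/-- A permutation sending `b ↦ a` and `b' ↦ a'`. -/
lemma exists_perm_pair {α : Type*} [DecidableEq α] {a a' b b' : α}
    (hab : a ≠ a') (hbb : b ≠ b') :
    ∃ ρ : Equiv.Perm α, ρ b = a ∧ ρ b' = a' := by
  refine ⟨(Equiv.swap b a).trans (Equiv.swap ((Equiv.swap b a) b') a'), ?_, ?_⟩
  · have hx : a ≠ (Equiv.swap b a) b' := by
      intro h
      have : (Equiv.swap b a) b = (Equiv.swap b a) b' := by
        rw [Equiv.swap_apply_left]; exact h
      exact hbb ((Equiv.swap b a).injective this)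
  -- ρ b = swap x a' (swap b a b) = swap x a' a = a
    simp only [Equiv.trans_apply, Equiv.swap_apply_left]
    exact Equiv.swap_apply_of_ne_of_ne hx hab
  · simp only [Equiv.trans_apply, Equiv.swap_apply_left]

/-- The number of permutations with `f (π a) = f (π a')` only depends on whether `a = a'`. -/
lemma count_pair_const {α β : Type*} [Fintype α] [DecidableEq α] [DecidableEq β]
    (f : α → β) {a a' b b' : α} (hab : a ≠ a') (hbb : b ≠ b') :
    (univ.filter (fun π : Equiv.Perm α => f (π a) = f (π a'))).card =
    (univ.filter (fun π : Equiv.Perm α => f (π b) = f (π b'))).card := by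
  obtain ⟨ρ, h1, h2⟩ := exists_perm_pair hab hbb
  apply Finset.card_bij' (fun π _ => π * ρ) (fun τ _ => τ * ρ⁻¹)
  · intro π hπ
    simp only [mem_filter, mem_univ, true_and] at hπ ⊢
    simpa [Equiv.Perm.mul_apply, h1, h2] using hπ
  · intro τ hτ
    simp only [mem_filter, mem_univ, true_and] at hτ ⊢
    have e1 : (τ * ρ⁻¹) a = τ (ρ⁻¹ a) := rfl
    have h1' : ρ⁻¹ a = b := by rw [← h1]; simp
    have h2' : ρ⁻¹ a' = b' := by rw [← h2]; simp
    simpa [Equiv.Perm.mul_apply, h1', h2'] using hτ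
  · intro π hπ; group
  · intro τ hτ; group

lemma key_count {α β : Type*} [Fintype α] [DecidableEq α] [Fintype β] [DecidableEq β]
    (f : α → β) (d : α → ℝ) (hd : ∑ a, d a = 0) :
    ∑ π : Equiv.Perm α, ∑ b : β, (∑ a, if f (π a) = b then d a else 0) ^ 2 ≤
      (Fintype.card (Equiv.Perm α) : ℝ) * ∑ a, (d a) ^ 2 := by
  classical
  set N := Fintype.card (Equiv.Perm α) with hN
  have step1 : ∀ π : Equiv.Perm α,
      ∑ b : β, (∑ a, if f (π a) = b then d a else 0) ^ 2
      = ∑ a, ∑ a', if f (π a) = f (π a') then d a * d a' else 0 := by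
    intro π
    have h1 : ∀ b : β, (∑ a, if f (π a) = b then d a else 0) ^ 2
        = ∑ a, ∑ a', ((if f (π a) = b then d a else 0) * (if f (π a') = b then d a' else 0)) := by
      intro b; rw [sq, Finset.sum_mul_sum]
    rw [Finset.sum_congr rfl (fun b _ => h1 b), Finset.sum_comm]
    refine Finset.sum_congr rfl fun a _ => ?_
    rw [Finset.sum_comm]
    refine Finset.sum_congr rfl fun a' _ => ?_
    by_cases h : f (π a) = f (π a')
    · rw [if_pos h, ← h]
      have h2 : ∀ b : β, (if f (π a) = b then d a else 0) * (if f (π a) = b then d a' else 0)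
          = if f (π a) = b then d a * d a' else 0 := by
        intro b; split_ifs <;> ring
      rw [Finset.sum_congr rfl (fun b _ => h2 b), Finset.sum_ite_eq, if_pos (mem_univ _)]
    · rw [if_neg h]
      apply Finset.sum_eq_zero
      intro b _
      by_cases h1' : f (π a) = b
      · rw [if_pos h1', if_neg (fun hh => h (h1'.trans hh.symm)), mul_zero]
      · rw [if_neg h1', zero_mul]
  -- counting function
  set c : α → α → ℕ := fun a a' => (univ.filter (fun π : Equiv.Perm α => f (π a) = f (π a'))).card
    with hc
  set F : α → α → ℝ := fun a a' => (c a a' : ℝ) * (d a * d a') with hF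
  have step2 : ∑ π : Equiv.Perm α, ∑ b : β, (∑ a, if f (π a) = b then d a else 0) ^ 2
      = ∑ a, ∑ a', F a a' := by
    rw [Finset.sum_congr rfl (fun π _ => step1 π), Finset.sum_comm]
    refine Finset.sum_congr rfl fun a _ => ?_
    rw [Finset.sum_comm]
    refine Finset.sum_congr rfl fun a' _ => ?_
    rw [← Finset.sum_filter, Finset.sum_const, nsmul_eq_mul]
  have hcaa : ∀ a, c a a = N := by
    intro a
    simp only [hc]
    simp [hN]
  have split : ∑ a, ∑ a', F a a'
      = ∑ a, F a a + ∑ a, ∑ a' ∈ univ.erase a, F a a' := by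
    rw [← Finset.sum_add_distrib]
    refine Finset.sum_congr rfl fun a _ => ?_
    exact (Finset.add_sum_erase univ (F a) (mem_univ a)).symm
  have diag : ∑ a, F a a = (N : ℝ) * ∑ a, (d a) ^ 2 := by
    rw [Finset.mul_sum]
    refine Finset.sum_congr rfl fun a _ => ?_
    rw [hF]; simp only [hcaa a]; ring
  have off : ∑ a, ∑ a' ∈ univ.erase a, F a a' ≤ 0 := by
    by_cases hsub : Subsingleton α
    · have : ∀ a : α, (univ.erase a : Finset α) = ∅ := by
        intro a
        ext x
        simp only [Finset.mem_erase, Finset.mem_univ, and_true, Finset.notMem_empty, iff_false]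
        intro hx; exact hx (Subsingleton.elim x a)
      simp [this]
    · rw [not_subsingleton_iff_nontrivial] at hsub
      obtain ⟨x, y, hxy⟩ := hsub
      set m := c x y with hm
      have hcm : ∀ a a' : α, a ≠ a' → c a a' = m := by
        intro a a' h
        exact count_pair_const f h hxy
      have : ∑ a, ∑ a' ∈ univ.erase a, F a a' = - ((m : ℝ) * ∑ a, (d a) ^ 2) := by
        have h1 : ∀ a : α, ∑ a' ∈ univ.erase a, F a a' = (m : ℝ) * (d a * (- d a)) := by
          intro a
          have h2 : ∀ a' ∈ univ.erase a, F a a' = (m : ℝ) * (d a * d a') := by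
            intro a' ha'
            rw [hF]
            simp only []
            rw [hcm a a' (Ne.symm (Finset.mem_erase.mp ha').1)]
          rw [Finset.sum_congr rfl h2, ← Finset.mul_sum, ← Finset.mul_sum]
          congr 1
          rw [Finset.sum_erase_eq_sub (mem_univ a), hd, zero_sub]
        rw [Finset.sum_congr rfl (fun a _ => h1 a), ← Finset.mul_sum]
        rw [neg_mul_eq_mul_neg, ← Finset.sum_neg_distrib]
        congr 1
        refine Finset.sum_congr rfl fun a _ => ?_
        ring
      rw [this]
      have h3 : (0:ℝ) ≤ (m : ℝ) * ∑ a, (d a) ^ 2 := by positivity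
      linarith
  calc ∑ π : Equiv.Perm α, ∑ b : β, (∑ a, if f (π a) = b then d a else 0) ^ 2
      = ∑ a, F a a + ∑ a, ∑ a' ∈ univ.erase a, F a a' := by rw [step2, split]
    _ ≤ ∑ a, F a a := by linarith
    _ = (N : ℝ) * ∑ a, (d a) ^ 2 := diag

lemma count_fiber {A₀ C : Type*} [Fintype A₀] [Fintype C] [DecidableEq A₀]
    (π : Equiv.Perm (A₀ × C)) (a₀ : A₀) (x : ℝ) :
    ∑ a : A₀ × C, (if (π a).1 = a₀ then x else 0) = (Fintype.card C : ℝ) * x := by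
  rw [Equiv.sum_comp π (fun a : A₀ × C => if a.1 = a₀ then x else 0), Fintype.sum_prod_type]
  have h1 : ∀ a₀' : A₀, ∑ _c : C, (if a₀' = a₀ then x else 0)
      = if a₀' = a₀ then (Fintype.card C : ℝ) * x else 0 := by
    intro a₀'; split_ifs <;> simp [Finset.sum_const, nsmul_eq_mul, Finset.card_univ]
  rw [Finset.sum_congr rfl (fun a₀' _ => h1 a₀'), Finset.sum_ite_eq', if_pos (mem_univ _)]
/-- Classical decoupling at `α = 2`: averaging over a uniformly random `|C|`-to-1
binning `f(a) = (π a).1` for a uniformly random permutation `π` of `A = A₀ × C`,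
`E_π[W_2(A₀|B)] ≤ 2 · W_2(A|B)`, where
`W_2(X|B)_r = inf_{σ_B > 0} (Σ_{x,b} σ(b)⁻¹ (r(x,b) − r(b)/|X|)²)^{1/2}`. -/
theorem stmt_9 {A₀ C B : Type*} [Fintype A₀] [Fintype C] [Fintype B]
    [DecidableEq A₀] [DecidableEq C]
    (p : A₀ × C → B → ℝ) (hp : ∀ a b, 0 ≤ p a b)
    (hsum : ∑ a, ∑ b, p a b = 1) :
    (Fintype.card (Equiv.Perm (A₀ × C)) : ℝ)⁻¹ *
      (∑ π : Equiv.Perm (A₀ × C),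
        sInf {x | ∃ σ : B → ℝ, (∀ b, 0 < σ b) ∧ (∑ b, σ b) = 1 ∧
          x = Real.sqrt (∑ b, (σ b)⁻¹ * ∑ a₀,
            ((∑ a, if (π a).1 = a₀ then p a b else 0) -
              (∑ a', p a' b) / (Fintype.card A₀ : ℝ)) ^ 2)}) ≤
      2 * sInf {x | ∃ σ : B → ℝ, (∀ b, 0 < σ b) ∧ (∑ b, σ b) = 1 ∧
          x = Real.sqrt (∑ b, (σ b)⁻¹ * ∑ a,
            (p a b - (∑ a', p a' b) / (Fintype.card (A₀ × C) : ℝ)) ^ 2)} := by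
  classical
  set N := Fintype.card (Equiv.Perm (A₀ × C)) with hNdef
  have hN0 : 0 < N := Fintype.card_pos
  have hNR : (0:ℝ) < (N:ℝ) := by exact_mod_cast hN0
  -- the RHS set
  set S₂ := {x | ∃ σ : B → ℝ, (∀ b, 0 < σ b) ∧ (∑ b, σ b) = 1 ∧
      x = Real.sqrt (∑ b, (σ b)⁻¹ * ∑ a,
        (p a b - (∑ a', p a' b) / (Fintype.card (A₀ × C) : ℝ)) ^ 2)} with hS₂
  have hS₂nonneg : ∀ x ∈ S₂, 0 ≤ x := by
    rintro x ⟨σ, _, _, rfl⟩; exact Real.sqrt_nonneg _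
  have hInf₂ : 0 ≤ sInf S₂ := Real.sInf_nonneg hS₂nonneg
  have main : (N : ℝ)⁻¹ *
      (∑ π : Equiv.Perm (A₀ × C),
        sInf {x | ∃ σ : B → ℝ, (∀ b, 0 < σ b) ∧ (∑ b, σ b) = 1 ∧
          x = Real.sqrt (∑ b, (σ b)⁻¹ * ∑ a₀,
            ((∑ a, if (π a).1 = a₀ then p a b else 0) -
              (∑ a', p a' b) / (Fintype.card A₀ : ℝ)) ^ 2)}) ≤ sInf S₂ := by
    by_cases hB : Nonempty B
    · -- the sets are nonempty
      have hBc : (0:ℝ) < (Fintype.card B : ℝ) := by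
        exact_mod_cast Fintype.card_pos_iff.mpr hB
      have hσu : ∀ b : B, (0:ℝ) < (Fintype.card B : ℝ)⁻¹ := fun _ => by positivity
      have hσusum : ∑ _b : B, (Fintype.card B : ℝ)⁻¹ = 1 := by
        rw [Finset.sum_const, nsmul_eq_mul, Finset.card_univ]
        field_simp
      refine le_csInf ⟨_, (fun _ => (Fintype.card B : ℝ)⁻¹), hσu, hσusum, rfl⟩ ?_
      rintro x ⟨σ, hσpos, hσsum, rfl⟩
      -- nonemptiness of A
      have hAne : Nonempty (A₀ × C) := by
        by_contra h
        rw [not_nonempty_iff] at h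
        rw [Finset.univ_eq_empty, Finset.sum_empty] at hsum
        exact zero_ne_one hsum
      have hCne : Nonempty C := ⟨(Classical.arbitrary (A₀ × C)).2⟩
      have hA0ne : Nonempty A₀ := ⟨(Classical.arbitrary (A₀ × C)).1⟩
      have hCc : (0:ℝ) < (Fintype.card C : ℝ) := by
        exact_mod_cast Fintype.card_pos_iff.mpr hCne
      have hA0c : (0:ℝ) < (Fintype.card A₀ : ℝ) := by
        exact_mod_cast Fintype.card_pos_iff.mpr hA0ne
      have hAc : (0:ℝ) < (Fintype.card (A₀ × C) : ℝ) := by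
        exact_mod_cast Fintype.card_pos_iff.mpr hAne
      set d : A₀ × C → B → ℝ := fun a b =>
        p a b - (∑ a', p a' b) / (Fintype.card (A₀ × C) : ℝ) with hd
      have hd0 : ∀ b, ∑ a, d a b = 0 := by
        intro b
        rw [hd]
        simp only [Finset.sum_sub_distrib, Finset.sum_const, Finset.card_univ, nsmul_eq_mul]
        field_simp
        ring
      -- rewrite the inner expression in terms of d
      have hrw : ∀ (π : Equiv.Perm (A₀ × C)) (a₀ : A₀) (b : B),
          (∑ a, if (π a).1 = a₀ then p a b else 0) -
            (∑ a', p a' b) / (Fintype.card A₀ : ℝ)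
          = ∑ a, if (π a).1 = a₀ then d a b else 0 := by
        intro π a₀ b
        have h1 : ∀ a : A₀ × C, (if (π a).1 = a₀ then d a b else 0)
            = (if (π a).1 = a₀ then p a b else 0) -
              (if (π a).1 = a₀ then (∑ a', p a' b) / (Fintype.card (A₀ × C) : ℝ) else 0) := by
          intro a; rw [hd]; split_ifs <;> ring
        rw [Finset.sum_congr rfl (fun a _ => h1 a), Finset.sum_sub_distrib, count_fiber]
        congr 1
        rw [Fintype.card_prod]
        push_cast
        field_simp
      set T : Equiv.Perm (A₀ × C) → ℝ := fun π =>
        ∑ b, (σ b)⁻¹ * ∑ a₀, (∑ a, if (π a).1 = a₀ then d a b else 0) ^ 2 with hT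
      set V : ℝ := ∑ b, (σ b)⁻¹ * ∑ a, (d a b) ^ 2 with hV
      have hTnn : ∀ π, 0 ≤ T π := by
        intro π; rw [hT]
        apply Finset.sum_nonneg
        intro b _
        have := (hσpos b).le
        positivity
      have hVnn : 0 ≤ V := by
        rw [hV]
        apply Finset.sum_nonneg
        intro b _
        have := (hσpos b).le
        positivity
      -- each sInf is at most √(T π)
      have hstep1 : ∀ π : Equiv.Perm (A₀ × C),
          sInf {x | ∃ σ' : B → ℝ, (∀ b, 0 < σ' b) ∧ (∑ b, σ' b) = 1 ∧
            x = Real.sqrt (∑ b, (σ' b)⁻¹ * ∑ a₀,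
              ((∑ a, if (π a).1 = a₀ then p a b else 0) -
                (∑ a', p a' b) / (Fintype.card A₀ : ℝ)) ^ 2)} ≤ Real.sqrt (T π) := by
        intro π
        apply csInf_le
        · exact ⟨0, by rintro x ⟨σ', _, _, rfl⟩; exact Real.sqrt_nonneg _⟩
        · refine ⟨σ, hσpos, hσsum, ?_⟩
          rw [hT]
          congr 1
          refine Finset.sum_congr rfl fun b _ => ?_
          congr 1
          refine Finset.sum_congr rfl fun a₀ _ => ?_
          rw [hrw π a₀ b]
      -- average of T is at most V
      have hstep2 : ∑ π : Equiv.Perm (A₀ × C), T π ≤ (N : ℝ) * V := by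
        have hTc : ∑ π : Equiv.Perm (A₀ × C), T π
            = ∑ b, (σ b)⁻¹ * ∑ π : Equiv.Perm (A₀ × C),
                ∑ a₀, (∑ a, if (π a).1 = a₀ then d a b else 0) ^ 2 := by
          rw [Finset.sum_comm]
          refine Finset.sum_congr rfl fun b _ => ?_
          rw [Finset.mul_sum]
        rw [hTc, hV, Finset.mul_sum]
        apply Finset.sum_le_sum
        intro b _
        have hk := key_count (f := (Prod.fst : A₀ × C → A₀)) (d := fun a => d a b) (hd0 b)
        have hσb : (0:ℝ) ≤ (σ b)⁻¹ := inv_nonneg.mpr (hσpos b).le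
        calc (σ b)⁻¹ * ∑ π : Equiv.Perm (A₀ × C),
              ∑ a₀, (∑ a, if (π a).1 = a₀ then d a b else 0) ^ 2
            ≤ (σ b)⁻¹ * ((N : ℝ) * ∑ a, (d a b) ^ 2) := mul_le_mul_of_nonneg_left hk hσb
          _ = (N : ℝ) * ((σ b)⁻¹ * ∑ a, (d a b) ^ 2) := by ring
      -- Cauchy-Schwarz over π
      have hstep3 : ∑ π : Equiv.Perm (A₀ × C), Real.sqrt (T π) ≤ (N : ℝ) * Real.sqrt V := by
        have h1 : (∑ π : Equiv.Perm (A₀ × C), Real.sqrt (T π)) ^ 2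
            ≤ (N : ℝ) * ∑ π : Equiv.Perm (A₀ × C), T π := by
          have := sq_sum_le_card_mul_sum_sq (s := (univ : Finset (Equiv.Perm (A₀ × C))))
            (f := fun π => Real.sqrt (T π))
          rw [Finset.card_univ] at this
          calc (∑ π : Equiv.Perm (A₀ × C), Real.sqrt (T π)) ^ 2
              ≤ (N : ℝ) * ∑ π : Equiv.Perm (A₀ × C), Real.sqrt (T π) ^ 2 := by
                exact_mod_cast this
            _ = (N : ℝ) * ∑ π : Equiv.Perm (A₀ × C), T π := by
                congr 1
                exact Finset.sum_congr rfl fun π _ => Real.sq_sqrt (hTnn π)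
        have h2 : (∑ π : Equiv.Perm (A₀ × C), Real.sqrt (T π)) ^ 2 ≤ ((N : ℝ) * Real.sqrt V) ^ 2 := by
          calc (∑ π : Equiv.Perm (A₀ × C), Real.sqrt (T π)) ^ 2
              ≤ (N : ℝ) * ∑ π : Equiv.Perm (A₀ × C), T π := h1
            _ ≤ (N : ℝ) * ((N : ℝ) * V) := by
                exact mul_le_mul_of_nonneg_left hstep2 hNR.le
            _ = ((N : ℝ) * Real.sqrt V) ^ 2 := by
                rw [mul_pow, Real.sq_sqrt hVnn]; ring
        have h3 : 0 ≤ ∑ π : Equiv.Perm (A₀ × C), Real.sqrt (T π) :=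
          Finset.sum_nonneg fun π _ => Real.sqrt_nonneg _
        have h4 : 0 ≤ (N : ℝ) * Real.sqrt V := by positivity
        have h5 := Real.sqrt_le_sqrt h2
        rwa [Real.sqrt_sq h3, Real.sqrt_sq h4] at h5
      -- combine
      calc (N : ℝ)⁻¹ * (∑ π : Equiv.Perm (A₀ × C), sInf _)
          ≤ (N : ℝ)⁻¹ * (∑ π : Equiv.Perm (A₀ × C), Real.sqrt (T π)) := by
            apply mul_le_mul_of_nonneg_left _ (by positivity)
            exact Finset.sum_le_sum fun π _ => hstep1 π
        _ ≤ (N : ℝ)⁻¹ * ((N : ℝ) * Real.sqrt V) := by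
            apply mul_le_mul_of_nonneg_left hstep3 (by positivity)
        _ = Real.sqrt V := by field_simp
    · -- B is empty: all the sets are empty
      have h0 : ∀ σ : B → ℝ, (∑ b, σ b) = 0 := by
        intro σ
        rw [not_nonempty_iff] at hB
        rw [Finset.univ_eq_empty, Finset.sum_empty]
      have hS₂e : S₂ = ∅ := by
        rw [hS₂]
        ext x
        simp only [Set.mem_setOf_eq, Set.mem_empty_iff_false, iff_false]
        rintro ⟨σ, _, hσ1, _⟩
        rw [h0 σ] at hσ1
        exact zero_ne_one hσ1
      have hSπe : ∀ π : Equiv.Perm (A₀ × C),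
          {x | ∃ σ : B → ℝ, (∀ b, 0 < σ b) ∧ (∑ b, σ b) = 1 ∧
            x = Real.sqrt (∑ b, (σ b)⁻¹ * ∑ a₀,
              ((∑ a, if (π a).1 = a₀ then p a b else 0) -
                (∑ a', p a' b) / (Fintype.card A₀ : ℝ)) ^ 2)} = (∅ : Set ℝ) := by
        intro π
        ext x
        simp only [Set.mem_setOf_eq, Set.mem_empty_iff_false, iff_false]
        rintro ⟨σ, _, hσ1, _⟩
        rw [h0 σ] at hσ1
        exact zero_ne_one hσ1
      rw [hS₂e]
      simp only [hSπe, Real.sInf_empty, Finset.sum_const, Finset.card_univ, smul_zero, mul_zero]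
      exact le_refl 0
  linarith
end

section
/- Shearer-based leakage reduction: let A = (A₁,…,A_k) be uniformly distributed on {0,1}^k and p_{AB} a joint distribution with B a finite random variable. Then there exists a (k−1)-element subset S ⊂ {1,…,k} such that I(A_S; B) ≤ ((k−1)/k)·I(A;B), where A_S is the subsequence of bits indexed by S. -/
/-!
Since `A` is uniform, `I(A_S;B) = |S| - H(A_S,B) + H(B)`. Averaged over the `k` sets
`S = [k] \ {j}`, the claim therefore reduces to Han's inequality
`∑ⱼ H(A_{-j},B) ≥ (k-1) H(A,B) + H(B)`, which follows by telescoping along the chains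
`{m < j}` from the submodularity `H(X,Y,Z) + H(Z) ≤ H(X,Z) + H(Y,Z)`; the latter is
`log t ≤ t - 1` applied to `P(x,z) P(y,z) / (P(x,y,z) P(z))`. Some `j` is then at most the average.

Entropies appear negated, `negEntropy r = ∑ r log₂ r`, and the joint law of `(f A, B)` under `p`
is `fun c b => fiberSum (p · b) f c`.
-/

open Finset Real

section FiberSum

variable {α β γ δ : Type*} [Fintype α] [DecidableEq γ] [DecidableEq δ]

def fiberSum (w : α → ℝ) (f : α → γ) (c : γ) : ℝ :=
  ∑ a, if f a = c then w a else 0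

noncomputable def negEntropy [Fintype γ] (r : γ → ℝ) : ℝ :=
  ∑ c, r c * logb 2 (r c)

variable {w : α → ℝ}

lemma sum_fiberSum_mul [Fintype γ] (w : α → ℝ) (f : α → γ) (g : γ → ℝ) :
    ∑ c, fiberSum w f c * g c = ∑ a, w a * g (f a) := by
  simp only [fiberSum, sum_mul, ite_mul, zero_mul]
  rw [sum_comm]
  simp

lemma sum_fiberSum [Fintype γ] (w : α → ℝ) (f : α → γ) : ∑ c, fiberSum w f c = ∑ a, w a := by
  simpa using sum_fiberSum_mul w f 1

lemma fiberSum_id (w : α → ℝ) [DecidableEq α] : fiberSum w id = w := by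
  funext c
  simp [fiberSum]

lemma fiberSum_nonneg (hw : ∀ a, 0 ≤ w a) (f : α → γ) (c : γ) : 0 ≤ fiberSum w f c :=
  sum_nonneg fun a _ => by split_ifs <;> simp [hw a]

lemma le_fiberSum_apply (hw : ∀ a, 0 ≤ w a) (f : α → γ) (a : α) : w a ≤ fiberSum w f (f a) := by
  have := single_le_sum (f := fun a' => if f a' = f a then w a' else 0)
    (fun a' _ => by split_ifs <;> simp [hw a']) (mem_univ a)
  simpa [fiberSum] using this

lemma sum_fiberSum_prodMk_left [Fintype γ] (w : α → ℝ) (f : α → γ) (g : α → δ) (d : δ) :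
    ∑ c, fiberSum w (fun a => (f a, g a)) (c, d) = fiberSum w g d := by
  simp only [fiberSum, Prod.mk.injEq]
  rw [sum_comm]
  refine sum_congr rfl fun a _ => ?_
  by_cases hd : g a = d <;> simp [hd]

lemma fiberSum_apply_eq_of_ker {f : α → γ} {g : α → δ} (h : ∀ a a', f a = f a' ↔ g a = g a')
    (a : α) :
    fiberSum w f (f a) = fiberSum w g (g a) :=
  sum_congr rfl fun a' _ => by simp only [h a' a]

lemma negEntropy_fiberSum [Fintype γ] (w : α → ℝ) (f : α → γ) :
    negEntropy (fiberSum w f) = ∑ a, w a * logb 2 (fiberSum w f (f a)) :=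
  sum_fiberSum_mul w f _

lemma negEntropy_fiberSum_congr [Fintype γ] [Fintype δ] {f : α → γ} {g : α → δ}
    (h : ∀ a a', f a = f a' ↔ g a = g a') :
    negEntropy (fiberSum w f) = negEntropy (fiberSum w g) := by
  simp only [negEntropy_fiberSum, fiberSum_apply_eq_of_ker h]

lemma negEntropy_fiberSum_of_forall_eq [Fintype γ] {f : α → γ} (hf : ∀ a a', f a = f a') :
    negEntropy (fiberSum w f) = (∑ a, w a) * logb 2 (∑ a, w a) := by
  rw [negEntropy_fiberSum, sum_mul]
  refine sum_congr rfl fun a _ => ?_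
  simp only [fiberSum, hf _ a, if_true]

lemma fiberSum_sum [Fintype β] (p : α → β → ℝ) (f : α → γ) (c : γ) :
    fiberSum (fun a => ∑ b, p a b) f c = ∑ b, fiberSum (p · b) f c := by
  simp only [fiberSum]
  rw [sum_comm]
  exact sum_congr rfl fun a _ => by split_ifs <;> simp

end FiberSum

lemma sum_mul_logb_le {ι : Type*} (s : Finset ι) {w R : ι → ℝ} (hw : ∀ i, 0 ≤ w i)
    (hR : ∀ i, 0 < w i → 0 < R i) :
    ∑ i ∈ s, w i * logb 2 (R i) ≤ (∑ i ∈ s, w i * R i - ∑ i ∈ s, w i) / log 2 := by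
  rw [← sum_sub_distrib, sum_div]
  refine sum_le_sum fun i _ => ?_
  rcases (hw i).eq_or_lt with h | h
  · simp [← h]
  · have hlog := mul_le_mul_of_nonneg_left (log_le_sub_one_of_pos (hR i h)) h.le
    rw [logb, mul_div_assoc', div_le_div_iff_of_pos_right (log_pos one_lt_two)]
    linarith

section Submodularity

variable {α X Y Z : Type*} [Fintype α] [Fintype X] [Fintype Y] [Fintype Z]
  [DecidableEq X] [DecidableEq Y] [DecidableEq Z] {w : α → ℝ}

lemma sum_fiberSum_mul_ratio_le (hw : ∀ a, 0 ≤ w a) (f : α → X) (g : α → Y) (h : α → Z) :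
    ∑ v : X × Y × Z, fiberSum w (fun a => (f a, g a, h a)) v *
      (fiberSum w (fun a => (f a, h a)) (v.1, v.2.2) *
        fiberSum w (fun a => (g a, h a)) (v.2.1, v.2.2) /
          (fiberSum w (fun a => (f a, g a, h a)) v * fiberSum w h v.2.2)) ≤ ∑ a, w a := by
  set Pfh := fiberSum w fun a => (f a, h a)
  set Pgh := fiberSum w fun a => (g a, h a)
  set Pfgh := fiberSum w fun a => (f a, g a, h a)
  set Ph := fiberSum w h
  calc _ ≤ ∑ v : X × Y × Z, Pfh (v.1, v.2.2) * Pgh (v.2.1, v.2.2) / Ph v.2.2 := by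
        refine sum_le_sum fun v _ => ?_
        rcases eq_or_ne (Pfgh v) 0 with hv | hv
        · rw [hv, zero_mul]
          have := fiberSum_nonneg hw (fun a => (f a, h a)) (v.1, v.2.2)
          have := fiberSum_nonneg hw (fun a => (g a, h a)) (v.2.1, v.2.2)
          have := fiberSum_nonneg hw h v.2.2
          positivity
        · exact le_of_eq (by field_simp)
    _ = ∑ z, (∑ x, Pfh (x, z)) * (∑ y, Pgh (y, z)) / Ph z := by
        simp only [Fintype.sum_prod_type, sum_mul, mul_sum, sum_div]
        rw [sum_comm]
        exact (sum_congr rfl fun _ _ => sum_comm).trans sum_comm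
    _ = ∑ z, Ph z * Ph z / Ph z := by simp only [Pfh, Pgh, Ph, sum_fiberSum_prodMk_left]
    -- `mul_self_div_self` holds also where `Ph z = 0`, since `0 / 0 = 0`.
    _ = ∑ a, w a := by simp only [mul_self_div_self, Ph, sum_fiberSum]

theorem negEntropy_fiberSum_submodular (hw : ∀ a, 0 ≤ w a) (f : α → X) (g : α → Y)
    (h : α → Z) :
    negEntropy (fiberSum w fun a => (f a, h a)) + negEntropy (fiberSum w fun a => (g a, h a)) ≤
      negEntropy (fiberSum w fun a => (f a, g a, h a)) + negEntropy (fiberSum w h) := by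
  set Pfh := fiberSum w fun a => (f a, h a)
  set Pgh := fiberSum w fun a => (g a, h a)
  set Pfgh := fiberSum w fun a => (f a, g a, h a)
  set Ph := fiberSum w h
  let r : X × Y × Z → ℝ := fun v => Pfh (v.1, v.2.2) * Pgh (v.2.1, v.2.2) / (Pfgh v * Ph v.2.2)
  have hpos : ∀ a, 0 < w a → 0 < Pfh (f a, h a) ∧ 0 < Pgh (g a, h a) ∧
      0 < Pfgh (f a, g a, h a) ∧ 0 < Ph (h a) := fun a ha =>
    ⟨ha.trans_le (le_fiberSum_apply hw _ a), ha.trans_le (le_fiberSum_apply hw _ a),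
      ha.trans_le (le_fiberSum_apply hw _ a), ha.trans_le (le_fiberSum_apply hw _ a)⟩
  have hr : ∀ a, 0 < w a → 0 < r (f a, g a, h a) := fun a ha => by
    obtain ⟨h1, h2, h3, h4⟩ := hpos a ha
    exact div_pos (mul_pos h1 h2) (mul_pos h3 h4)
  have hdiff : negEntropy Pfh + negEntropy Pgh - (negEntropy Pfgh + negEntropy Ph) =
      ∑ a, w a * logb 2 (r (f a, g a, h a)) := by
    simp only [Pfh, Pgh, Pfgh, Ph, negEntropy_fiberSum, ← sum_add_distrib, ← sum_sub_distrib]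
    refine sum_congr rfl fun a _ => ?_
    rcases (hw a).eq_or_lt with ha | ha
    · simp [← ha]
    · obtain ⟨h1, h2, h3, h4⟩ := hpos a ha
      rw [logb_div (mul_pos h1 h2).ne' (mul_pos h3 h4).ne', logb_mul h1.ne' h2.ne',
        logb_mul h3.ne' h4.ne']
      ring
  have hmass : ∑ a, w a * r (f a, g a, h a) ≤ ∑ a, w a :=
    (sum_fiberSum_mul w _ r).symm.trans_le (sum_fiberSum_mul_ratio_le hw f g h)
  have hgibbs := sum_mul_logb_le univ hw hr
  have : (∑ a, w a * r (f a, g a, h a) - ∑ a, w a) / log 2 ≤ 0 :=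
    div_nonpos_of_nonpos_of_nonneg (by linarith) (log_pos one_lt_two).le
  linarith

end Submodularity

section Mask

variable {k : ℕ} {β : Type*} [Fintype β]

def mask (S : Finset (Fin k)) (x : Fin k → Bool) : Fin k → Bool :=
  fun i => if i ∈ S then x i else false

lemma mask_eq_mask_iff {S : Finset (Fin k)} {x x' : Fin k → Bool} :
    mask S x = mask S x' ↔ ∀ i ∈ S, x i = x' i := by
  simp only [funext_iff, mask]
  refine ⟨fun h i hi => by simpa [hi] using h i, fun h i => ?_⟩
  split_ifs with hi
  exacts [h i hi, rfl]

lemma mask_univ : mask (k := k) univ = id := by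
  funext x i
  simp [mask]

noncomputable def maskNegEntropy (p : (Fin k → Bool) → β → ℝ) (S : Finset (Fin k)) : ℝ :=
  ∑ b, negEntropy (fiberSum (p · b) (mask S))

variable {p : (Fin k → Bool) → β → ℝ}

theorem maskNegEntropy_supermodular (hp : ∀ x b, 0 ≤ p x b) {S T : Finset (Fin k)} (hST : S ⊆ T)
    (i : Fin k) :
    maskNegEntropy p (insert i S) + maskNegEntropy p T ≤
      maskNegEntropy p (insert i T) + maskNegEntropy p S := by
  simp only [maskNegEntropy, ← sum_add_distrib]
  refine sum_le_sum fun b _ => ?_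
  have key := negEntropy_fiberSum_submodular (fun x => hp x b) (· i) (mask T) (mask S)
  rwa [negEntropy_fiberSum_congr (f := fun x => (x i, mask S x)) (g := mask (insert i S))
      fun x x' => ?_,
    negEntropy_fiberSum_congr (f := fun x => (mask T x, mask S x)) (g := mask T) fun x x' => ?_,
    negEntropy_fiberSum_congr (f := fun x => (x i, mask T x, mask S x)) (g := mask (insert i T))
      fun x x' => ?_] at key
  all_goals simp only [Prod.mk.injEq, mask_eq_mask_iff, forall_mem_insert]
  · exact and_congr_right fun _ => ⟨And.left, fun h => ⟨h, fun j hj => h j (hST hj)⟩⟩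
  · exact ⟨And.left, fun h => ⟨h, fun j hj => h j (hST hj)⟩⟩

theorem sum_maskNegEntropy_erase_le (hp : ∀ x b, 0 ≤ p x b) :
    ∑ j, maskNegEntropy p (univ.erase j) ≤
      (k - 1) * maskNegEntropy p univ + maskNegEntropy p ∅ := by
  let F : ℕ → Finset (Fin k) := fun n => {m | (m : ℕ) < n}
  have hstep : ∀ j : Fin k, maskNegEntropy p (F (j + 1)) + maskNegEntropy p (univ.erase j) ≤
      maskNegEntropy p univ + maskNegEntropy p (F j) := by
    intro j
    have hFj : F j ⊆ univ.erase j := fun m hm => by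
      simp only [F, mem_filter, mem_univ, true_and] at hm
      simpa using Fin.ne_of_lt hm
    have hinsert : insert j (F j) = F (j + 1) := by
      ext m
      simp only [F, mem_insert, mem_filter, mem_univ, true_and, Fin.ext_iff]
      omega
    have := maskNegEntropy_supermodular hp hFj j
    rwa [insert_erase (mem_univ j), hinsert] at this
  have htelescope : ∑ j : Fin k, (maskNegEntropy p (F (j + 1)) - maskNegEntropy p (F j)) =
      maskNegEntropy p univ - maskNegEntropy p ∅ := by
    rw [Fin.sum_univ_eq_sum_range (fun n => maskNegEntropy p (F (n + 1)) - maskNegEntropy p (F n)),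
      sum_range_sub (fun n => maskNegEntropy p (F n))]
    congr 2 <;> ext m <;> simp [F]
  have := sum_le_sum fun j (_ : j ∈ univ) => hstep j
  simp only [sum_add_distrib, sum_const, card_univ, Fintype.card_fin, nsmul_eq_mul] at this
  rw [sum_sub_distrib] at htelescope
  linarith

end Mask

section MutualInfo

variable {α β : Type*} [Fintype α] [Fintype β]

noncomputable def mutualInfo (q : α → β → ℝ) : ℝ :=
  ∑ a, ∑ b, q a b * logb 2 (q a b / ((∑ b', q a b') * ∑ a', q a' b))

theorem mutualInfo_eq {q : α → β → ℝ} (hq : ∀ a b, 0 ≤ q a b) :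
    mutualInfo q = ∑ a, ∑ b, q a b * logb 2 (q a b)
      - ∑ a, (∑ b, q a b) * logb 2 (∑ b, q a b) - ∑ b, (∑ a, q a b) * logb 2 (∑ a, q a b) := by
  have hterm : ∀ a b, q a b * logb 2 (q a b / ((∑ b', q a b') * ∑ a', q a' b)) =
      q a b * logb 2 (q a b) - q a b * logb 2 (∑ b', q a b') - q a b * logb 2 (∑ a', q a' b) := by
    intro a b
    rcases (hq a b).eq_or_lt with h | h
    · simp [← h]
    · have hA := h.trans_le (single_le_sum (fun b' _ => hq a b') (mem_univ b))
      have hB := h.trans_le (single_le_sum (fun a' _ => hq a' b) (mem_univ a))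
      rw [logb_div h.ne' (by positivity), logb_mul hA.ne' hB.ne']
      ring
  simp only [mutualInfo, hterm]
  simp only [sum_sub_distrib, sum_mul]
  rw [sum_comm (f := fun a b => q a b * logb 2 (∑ a', q a' b))]

end MutualInfo

section Uniform

variable {k : ℕ}

lemma card_mask_fiber (S : Finset (Fin k)) (x : Fin k → Bool) :
    #{x' | mask S x' = mask S x} = 2 ^ #Sᶜ := by
  have : ({x' | mask S x' = mask S x} : Finset _) =
      Fintype.piFinset fun i => if i ∈ S then {x i} else univ := by
    ext x'
    simp only [mem_filter, mem_univ, true_and, mask_eq_mask_iff, Fintype.mem_piFinset]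
    refine forall_congr' fun i => ?_
    split_ifs with hi <;> simp [hi]
  rw [this, Fintype.card_piFinset]
  simp [apply_ite, prod_ite, filter_not, compl_eq_univ_sdiff]

lemma negEntropy_fiberSum_uniform_mask (S : Finset (Fin k)) :
    negEntropy (fiberSum (fun _ => ((2 : ℝ) ^ k)⁻¹) (mask S)) = -#S := by
  have hfiber : ∀ x,
      fiberSum (fun _ => ((2 : ℝ) ^ k)⁻¹) (mask S) (mask S x) = ((2 : ℝ) ^ #S)⁻¹ := by
    intro x
    have hk : (2 : ℝ) ^ k = 2 ^ #Sᶜ * 2 ^ #S := by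
      rw [← pow_add, card_compl_add_card, Fintype.card_fin]
    rw [fiberSum, ← sum_filter, sum_const, card_mask_fiber, nsmul_eq_mul, hk]
    push_cast
    field_simp
  simp [negEntropy_fiberSum, hfiber, logb_pow]

end Uniform

section Leakage

variable {k : ℕ} {β : Type*} [Fintype β] {p : (Fin k → Bool) → β → ℝ}

theorem mutualInfo_fiberSum_mask (hp : ∀ x b, 0 ≤ p x b)
    (huni : ∀ x, ∑ b, p x b = ((2 : ℝ) ^ k)⁻¹) (S : Finset (Fin k)) :
    mutualInfo (fun y b => fiberSum (p · b) (mask S) y) =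
      maskNegEntropy p S + #S - maskNegEntropy p ∅ := by
  have hmarginal : (fun y => ∑ b, fiberSum (p · b) (mask S) y) =
      fiberSum (fun _ => ((2 : ℝ) ^ k)⁻¹) (mask S) := by
    funext y
    rw [← fiberSum_sum, funext huni]
  rw [mutualInfo_eq fun y b => fiberSum_nonneg (fun x => hp x b) _ y, sum_comm]
  simp only [sum_fiberSum]
  have hA : ∑ y, (∑ b, fiberSum (p · b) (mask S) y) * logb 2 (∑ b, fiberSum (p · b) (mask S) y) =
      -#S := by
    rw [← negEntropy_fiberSum_uniform_mask S, ← hmarginal]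
    rfl
  have hB : ∑ b, (∑ x, p x b) * logb 2 (∑ x, p x b) = maskNegEntropy p ∅ := by
    refine sum_congr rfl fun b _ => (negEntropy_fiberSum_of_forall_eq fun x x' => ?_).symm
    exact mask_eq_mask_iff.mpr (by simp)
  rw [hA, hB]
  simp only [maskNegEntropy, negEntropy]
  ring

theorem sum_mutualInfo_fiberSum_mask_erase_le (hp : ∀ x b, 0 ≤ p x b)
    (huni : ∀ x, ∑ b, p x b = ((2 : ℝ) ^ k)⁻¹) :
    ∑ j, mutualInfo (fun y b => fiberSum (p · b) (mask (univ.erase j)) y) ≤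
      (k - 1) * mutualInfo p := by
  have hfull := mutualInfo_fiberSum_mask hp huni univ
  simp only [mask_univ, fiberSum_id, card_univ, Fintype.card_fin] at hfull
  have hcard : ∀ j : Fin k, ((#(univ.erase j) : ℕ) : ℝ) = k - 1 := fun j => by
    rw [card_erase_of_mem (mem_univ j), card_univ, Fintype.card_fin, Nat.cast_pred j.pos]
  simp only [mutualInfo_fiberSum_mask hp huni, hcard, sum_sub_distrib, sum_add_distrib, sum_const,
    card_univ, Fintype.card_fin, nsmul_eq_mul]
  rw [show mutualInfo p = _ from hfull]
  linear_combination sum_maskNegEntropy_erase_le hp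

end Leakage

theorem stmt_11_general {B : Type*} [Fintype B] (k : ℕ) (hk : 0 < k)
    (p : (Fin k → Bool) → B → ℝ) (hp : ∀ x b, 0 ≤ p x b)
    (huni : ∀ x, ∑ b, p x b = ((2:ℝ) ^ k)⁻¹) :
    ∃ S : Finset (Fin k), S.card = k - 1 ∧
      (∑ y : Fin k → Bool, ∑ b,
          (∑ x, if (fun i => if i ∈ S then x i else false) = y then p x b else 0) *
            Real.logb 2
              ((∑ x, if (fun i => if i ∈ S then x i else false) = y then p x b else 0) /
                ((∑ b', ∑ x, if (fun i => if i ∈ S then x i else false) = y then p x b'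
                    else 0) *
                  (∑ x', p x' b)))) ≤
        ((k : ℝ) - 1) / k *
          ∑ x, ∑ b, p x b *
            Real.logb 2 (p x b / ((∑ b', p x b') * (∑ x', p x' b))) := by
  have hk' : (0 : ℝ) < k := by exact_mod_cast hk
  have : Nonempty (Fin k) := ⟨⟨0, hk⟩⟩
  obtain ⟨j, -, hj⟩ := exists_le_of_sum_le univ_nonempty
    ((sum_mutualInfo_fiberSum_mask_erase_le hp huni).trans_eq
      (by rw [sum_const, card_univ, Fintype.card_fin, nsmul_eq_mul]; field_simp :
        (k - 1) * mutualInfo p = ∑ _j : Fin k, (k - 1) / k * mutualInfo p))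
  refine ⟨univ.erase j, by simp, ?_⟩
  simp only [mutualInfo, sum_fiberSum] at hj
  exact hj

/-- Shearer-based leakage reduction: for `A` uniform on `{0,1}^k` jointly distributed
with `B`, there is a `(k−1)`-element subset `S` of the bit positions with
`I(A_S;B) ≤ ((k−1)/k)·I(A;B)`.  Here `A_S` is represented by masking the bits outside
`S` to `false`, and mutual information uses the base-2 logarithm. -/
theorem stmt_11 {B : Type*} [Fintype B] (k : ℕ) (hk : 0 < k)
    (p : (Fin k → Bool) → B → ℝ) (hp : ∀ x b, 0 ≤ p x b)
    (hsum : ∑ x, ∑ b, p x b = 1)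
    (huni : ∀ x, ∑ b, p x b = ((2:ℝ) ^ k)⁻¹) :
    ∃ S : Finset (Fin k), S.card = k - 1 ∧
      (∑ y : Fin k → Bool, ∑ b,
          (∑ x, if (fun i => if i ∈ S then x i else false) = y then p x b else 0) *
            Real.logb 2
              ((∑ x, if (fun i => if i ∈ S then x i else false) = y then p x b else 0) /
                ((∑ b', ∑ x, if (fun i => if i ∈ S then x i else false) = y then p x b'
                    else 0) *
                  (∑ x', p x' b)))) ≤
        ((k : ℝ) - 1) / k *
          ∑ x, ∑ b, p x b *
            Real.logb 2 (p x b / ((∑ b', p x b') * (∑ x', p x' b))) :=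
  stmt_11_general k hk p hp huni
end

section
/- Erasure channel example: let p_A be uniform on a finite set A with |A| ≥ 2, and let B take values in {e} ∪ A with p(e|a) = ε and p(a|a) = 1−ε for some ε ∈ [0,1]. Then for any α ≥ 1, W_α(A|B) = (1−ε)·[(1 − 1/|A|)^α + (|A|−1)/|A|^α]^{1/α} and V_α(A;B) = |A|^{1/α'}·W_α(A|B), where 1/α + 1/α' = 1. -/
open Finset

lemma sum_if_const' {A : Type*} [Fintype A] [DecidableEq A] (b : A) (X Y : ℝ) :
    ∑ a, (if b = a then X else Y) = X + ((Fintype.card A : ℝ) - 1) * Y := by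
  have h : ∀ a : A, (if b = a then X else Y) = Y + (if b = a then X - Y else 0) := by
    intro a; by_cases h : b = a <;> simp [h]
  rw [Finset.sum_congr rfl (fun a _ => h a), Finset.sum_add_distrib,
    Finset.sum_const, Finset.sum_ite_eq, card_univ]
  simp; ring

/-- Erasure channel example: for `p_A` uniform on `A` (`|A| ≥ 2`) and `B` the output of
an erasure channel with erasure probability `ε`,
`W_α(A|B) = (1−ε)·[(1 − 1/|A|)^α + (|A|−1)/|A|^α]^{1/α}` and
`V_α(A;B) = |A|^{1/α'}·W_α(A|B)` with `1/α' = 1 − 1/α`. -/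
theorem stmt_13 {A : Type*} [Fintype A] [DecidableEq A]
    (hA : 2 ≤ Fintype.card A)
    (ε α : ℝ) (hε0 : 0 ≤ ε) (hε1 : ε ≤ 1) (hα : 1 ≤ α)
    (p : A → Option A → ℝ)
    (hnone : ∀ a, p a none = (Fintype.card A : ℝ)⁻¹ * ε)
    (hsome : ∀ a a', p a (some a') =
      (Fintype.card A : ℝ)⁻¹ * (if a' = a then 1 - ε else 0)) :
    (∑ b, (∑ a', p a' b) *
        (∑ a, |p a b / (∑ a'', p a'' b) - (Fintype.card A : ℝ)⁻¹| ^ α) ^ (1/α)) =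
      (1 - ε) * ((1 - (Fintype.card A : ℝ)⁻¹) ^ α +
        ((Fintype.card A : ℝ) - 1) / (Fintype.card A : ℝ) ^ α) ^ (1/α) ∧
    (∑ b, (∑ a, (∑ b', p a b') *
        |p a b / (∑ b', p a b') - ∑ a', p a' b| ^ α) ^ (1/α)) =
      (Fintype.card A : ℝ) ^ (1 - 1/α) *
        (∑ b, (∑ a', p a' b) *
          (∑ a, |p a b / (∑ a'', p a'' b) - (Fintype.card A : ℝ)⁻¹| ^ α) ^ (1/α)) := by
  set n : ℝ := (Fintype.card A : ℝ) with hn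
  have hn2 : (2:ℝ) ≤ n := by rw [hn]; exact_mod_cast hA
  have hn0 : (0:ℝ) < n := by linarith
  have hnne : n ≠ 0 := ne_of_gt hn0
  have hα0 : α ≠ 0 := by intro h; rw [h] at hα; linarith
  have hαinv0 : (1/α : ℝ) ≠ 0 := one_div_ne_zero hα0
  have hεn : (0:ℝ) ≤ 1 - ε := by linarith
  have h1n : (0:ℝ) ≤ 1 - n⁻¹ := by
    rw [sub_nonneg]
    rw [inv_le_one_iff₀]
    right; linarith
  have hinv0 : (0:ℝ) ≤ n⁻¹ := by positivity
  -- sums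
  have hsum_none : ∑ a, p a none = ε := by
    simp only [hnone, Finset.sum_const, card_univ, nsmul_eq_mul]
    rw [← hn, ← mul_assoc, mul_inv_cancel₀ hnne, one_mul]
  have hsum_some : ∀ b0 : A, ∑ a, p a (some b0) = n⁻¹ * (1 - ε) := by
    intro b0
    simp only [hsome, ← Finset.mul_sum, Finset.sum_ite_eq, Finset.mem_univ, if_true]
  have hmarg : ∀ a, ∑ b, p a b = n⁻¹ := by
    intro a
    rw [Fintype.sum_option]
    simp only [hnone, hsome, Finset.sum_ite_eq', Finset.mem_univ, if_true, ← mul_add]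
    rw [← Finset.mul_sum, Finset.sum_ite_eq', if_pos (Finset.mem_univ a)]
    ring
  set S : ℝ := (1 - n⁻¹) ^ α + (n - 1) / n ^ α with hSdef
  have hS0 : 0 ≤ S := by
    apply add_nonneg
    · exact Real.rpow_nonneg h1n α
    · apply div_nonneg (by linarith) (Real.rpow_nonneg hn0.le α)
  have hinner : ∀ b0 : A, (1 - n⁻¹) ^ α + (n - 1) * (n⁻¹) ^ α = S := by
    intro _
    rw [hSdef, Real.inv_rpow hn0.le, ← div_eq_mul_inv]
  -- first part
  have hW : (∑ b, (∑ a', p a' b) *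
        (∑ a, |p a b / (∑ a'', p a'' b) - n⁻¹| ^ α) ^ (1/α)) = (1 - ε) * S ^ (1/α) := by
    rw [Fintype.sum_option]
    have tnone : (∑ a', p a' none) *
        (∑ a, |p a none / (∑ a'', p a'' none) - n⁻¹| ^ α) ^ (1/α) = 0 := by
      rw [hsum_none]
      by_cases hε : ε = 0
      · rw [hε, zero_mul]
      · have : ∀ a : A, |p a none / ε - n⁻¹| ^ α = 0 := by
          intro a
          rw [hnone, mul_div_assoc, div_self hε, mul_one, sub_self, abs_zero,
            Real.zero_rpow hα0]
        rw [Finset.sum_congr rfl (fun a _ => this a), Finset.sum_const_zero,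
          Real.zero_rpow hαinv0, mul_zero]
    have tsome : ∀ b0 : A, (∑ a', p a' (some b0)) *
        (∑ a, |p a (some b0) / (∑ a'', p a'' (some b0)) - n⁻¹| ^ α) ^ (1/α)
        = n⁻¹ * ((1 - ε) * S ^ (1/α)) := by
      intro b0
      rw [hsum_some b0]
      by_cases hε : ε = 1
      · rw [hε]; ring_nf
      · have h1ε : (0:ℝ) < 1 - ε := by
          rcases lt_or_eq_of_le hε1 with h | h
          · linarith
          · exact absurd h hε
        have hdenom : n⁻¹ * (1 - ε) ≠ 0 := by positivity
        have hstep : ∀ a : A, |p a (some b0) / (n⁻¹ * (1 - ε)) - n⁻¹| ^ α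
            = if b0 = a then (1 - n⁻¹) ^ α else (n⁻¹) ^ α := by
          intro a
          rw [hsome]
          by_cases h : b0 = a
          · rw [if_pos h, if_pos h, div_self hdenom, abs_of_nonneg h1n]
          · rw [if_neg h, if_neg h, mul_zero, zero_div, zero_sub, abs_neg,
              abs_of_nonneg hinv0]
        rw [Finset.sum_congr rfl (fun a _ => hstep a), sum_if_const', ← hn, hinner b0]
        ring
    rw [tnone, zero_add, Finset.sum_congr rfl (fun b0 _ => tsome b0),
      Finset.sum_const, card_univ, nsmul_eq_mul, ← hn, ← mul_assoc,
      mul_inv_cancel₀ hnne, one_mul]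
  refine ⟨hW, ?_⟩
  rw [hW, Fintype.sum_option]
  have vnone : (∑ a, (∑ b', p a b') *
      |p a none / (∑ b', p a b') - ∑ a', p a' none| ^ α) ^ (1/α) = 0 := by
    have : ∀ a : A, (∑ b', p a b') *
        |p a none / (∑ b', p a b') - ∑ a', p a' none| ^ α = 0 := by
      intro a
      rw [hmarg a, hsum_none, hnone]
      have : n⁻¹ * ε / n⁻¹ = ε := by
        field_simp
      rw [this, sub_self, abs_zero, Real.zero_rpow hα0, mul_zero]
    rw [Finset.sum_congr rfl (fun a _ => this a), Finset.sum_const_zero,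
      Real.zero_rpow hαinv0]
  have vsome : ∀ b0 : A, (∑ a, (∑ b', p a b') *
      |p a (some b0) / (∑ b', p a b') - ∑ a', p a' (some b0)| ^ α) ^ (1/α)
      = (n⁻¹) ^ (1/α) * ((1 - ε) * S ^ (1/α)) := by
    intro b0
    have hstep : ∀ a : A, (∑ b', p a b') *
        |p a (some b0) / (∑ b', p a b') - ∑ a', p a' (some b0)| ^ α
        = n⁻¹ * ((1 - ε) ^ α * (if b0 = a then (1 - n⁻¹) ^ α else (n⁻¹) ^ α)) := by
      intro a
      rw [hmarg a, hsum_some b0, hsome]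
      by_cases h : b0 = a
      · rw [if_pos h, if_pos h]
        have e1 : n⁻¹ * (1 - ε) / n⁻¹ - n⁻¹ * (1 - ε) = (1 - ε) * (1 - n⁻¹) := by
          field_simp
        rw [e1, abs_of_nonneg (mul_nonneg hεn h1n), Real.mul_rpow hεn h1n]
      · rw [if_neg h, if_neg h, mul_zero, zero_div, zero_sub, abs_neg,
          abs_of_nonneg (mul_nonneg hinv0 hεn), Real.mul_rpow hinv0 hεn]
        ring
    rw [Finset.sum_congr rfl (fun a _ => hstep a), ← Finset.mul_sum, ← Finset.mul_sum,
      sum_if_const', ← hn, hinner b0,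
      Real.mul_rpow hinv0 (mul_nonneg (Real.rpow_nonneg hεn α) hS0),
      Real.mul_rpow (Real.rpow_nonneg hεn α) hS0,
      ← Real.rpow_mul hεn, mul_one_div_cancel hα0, Real.rpow_one]
  rw [vnone, zero_add, Finset.sum_congr rfl (fun b0 _ => vsome b0),
    Finset.sum_const, card_univ, nsmul_eq_mul, ← hn]
  have key : n * (n⁻¹) ^ (1/α) = n ^ (1 - 1/α) := by
    rw [Real.inv_rpow hn0.le, Real.rpow_sub hn0, Real.rpow_one]
    exact (div_eq_mul_inv _ _).symm
  rw [← mul_assoc, key]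
end

section
/- Joint convexity lemma: let f: [0,∞) → ℝ be a twice continuously differentiable convex function with f'' > 0 on (0,∞) such that 1/f'' is concave. Then for any probability weights λ₁,…,λ_n ≥ 0 summing to 1, the function G(x₁,…,x_n) = Σ_i λ_i f(x_i) − f(Σ_i λ_i x_i) is jointly convex on (0,∞)^n. -/
/-!
Convexity can be tested on segments. Along `t ↦ x + t (y - x)`, with `d = y - x` and
`z = x + t d`, the second derivative of `G x = ∑ λᵢ f(xᵢ) - f(∑ λᵢ xᵢ)` is
`∑ λᵢ dᵢ² f''(zᵢ) - (∑ λᵢ dᵢ)² f''(∑ λᵢ zᵢ)`. Cauchy–Schwarz gives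
`(∑ λᵢ dᵢ)² ≤ (∑ λᵢ dᵢ² f''(zᵢ)) (∑ λᵢ / f''(zᵢ))`, and Jensen's inequality for the concave
function `1 / f''` gives `∑ λᵢ / f''(zᵢ) ≤ 1 / f''(∑ λᵢ zᵢ)`; together they make the second
derivative nonnegative.
-/

open Finset Set

theorem sq_sum_mul_le_of_concaveOn_one_div {ι : Type*} {s : Set ℝ} {φ : ℝ → ℝ}
    (hφ : ∀ u ∈ s, 0 < φ u) (hconc : ConcaveOn ℝ s fun u => 1 / φ u) {t : Finset ι}
    {w z d : ι → ℝ} (hw : ∀ i ∈ t, 0 ≤ w i) (hw1 : ∑ i ∈ t, w i = 1) (hz : ∀ i ∈ t, z i ∈ s) :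
    (∑ i ∈ t, w i * d i) ^ 2 * φ (∑ i ∈ t, w i * z i) ≤ ∑ i ∈ t, w i * d i ^ 2 * φ (z i) := by
  have hφz : ∀ i ∈ t, 0 < φ (z i) := fun i hi => hφ _ (hz i hi)
  have hφmean : 0 < φ (∑ i ∈ t, w i * z i) := hφ _ (hconc.1.sum_mem hw hw1 hz)
  have hS : 0 ≤ ∑ i ∈ t, w i * d i ^ 2 * φ (z i) :=
    sum_nonneg fun i hi => by have := hw i hi; have := hφz i hi; positivity
  have jensen : ∑ i ∈ t, w i * (1 / φ (z i)) ≤ 1 / φ (∑ i ∈ t, w i * z i) := by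
    simpa only [smul_eq_mul] using hconc.le_map_sum hw hw1 hz
  have cauchySchwarz : (∑ i ∈ t, w i * d i) ^ 2 ≤
      (∑ i ∈ t, w i * d i ^ 2 * φ (z i)) * ∑ i ∈ t, w i * (1 / φ (z i)) := by
    refine sum_sq_le_sum_mul_sum_of_sq_le_mul t (fun i hi => ?_) (fun i hi => ?_) fun i hi => ?_
    · have := hw i hi; have := hφz i hi; positivity
    · have := hw i hi; have := hφz i hi; positivity
    · field_simp [(hφz i hi).ne']
      rfl
  have := cauchySchwarz.trans (mul_le_mul_of_nonneg_left jensen hS)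
  rwa [mul_one_div, le_div_iff₀ hφmean] at this

theorem convexOn_of_convexOn_Icc_comp_line {E : Type*} [AddCommGroup E] [Module ℝ E]
    {s : Set E} {G : E → ℝ} (hs : Convex ℝ s)
    (hG : ∀ x ∈ s, ∀ y ∈ s, ConvexOn ℝ (Icc 0 1) fun t : ℝ => G (x + t • (y - x))) :
    ConvexOn ℝ s G := by
  refine ⟨hs, fun x hx y hy a b ha hb hab => ?_⟩
  have h := (hG x hx y hy).2 (left_mem_Icc.2 zero_le_one) (right_mem_Icc.2 zero_le_one) ha hb hab
  have hline : x + b • (y - x) = a • x + b • y := by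
    rw [eq_sub_of_add_eq hab]; module
  simp only [smul_eq_mul, mul_zero, mul_one, zero_add] at h
  rw [hline] at h
  simpa using h

theorem HasDerivAt.comp_line {h : ℝ → ℝ} {h' p q t : ℝ} (hh : HasDerivAt h h' (p + t * q)) :
    HasDerivAt (fun s => h (p + s * q)) (q * h') t := by
  have hline : HasDerivAt (fun s => p + s * q) q t := by
    simpa using ((hasDerivAt_id t).mul_const q).const_add p
  rw [mul_comm]
  exact hh.comp t hline

theorem hasDerivAt_sum_sub_comp_line {ι : Type*} [Fintype ι] {h h' : ℝ → ℝ}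
    {w x d : ι → ℝ} {c p q t : ℝ}
    (hx : ∀ i, HasDerivAt h (h' (x i + t * d i)) (x i + t * d i))
    (hp : HasDerivAt h (h' (p + t * q)) (p + t * q)) :
    HasDerivAt (fun s => ∑ i, w i * h (x i + s * d i) - c * h (p + s * q))
      (∑ i, w i * d i * h' (x i + t * d i) - c * q * h' (p + t * q)) t := by
  have hsum := HasDerivAt.fun_sum fun i (_ : i ∈ Finset.univ) => ((hx i).comp_line).const_mul (w i)
  simpa only [mul_assoc] using hsum.fun_sub (hp.comp_line.const_mul c)

theorem convexOn_sum_mul_sub_comp_sum_mul {ι : Type*} [Fintype ι] {U : Set ℝ} (hU : IsOpen U)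
    {f : ℝ → ℝ} (hf : ContDiffOn ℝ 2 f U) (hf2 : ∀ u ∈ U, 0 < iteratedDeriv 2 f u)
    (hconc : ConcaveOn ℝ U fun u => 1 / iteratedDeriv 2 f u)
    {l : ι → ℝ} (hl : ∀ i, 0 ≤ l i) (hl1 : ∑ i, l i = 1) :
    ConvexOn ℝ {x : ι → ℝ | ∀ i, x i ∈ U} fun x => ∑ i, l i * f (x i) - f (∑ i, l i * x i) := by
  have hUc : Convex ℝ U := hconc.1
  have hf' : ∀ u ∈ U, HasDerivAt f (deriv f u) u := fun u hu =>
    ((hf.differentiableOn two_ne_zero).differentiableAt (hU.mem_nhds hu)).hasDerivAt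
  have hf'' : ∀ u ∈ U, HasDerivAt (deriv f) (iteratedDeriv 2 f u) u := fun u hu => by
    rw [iteratedDeriv_succ, iteratedDeriv_one]
    exact (((hf.deriv_of_isOpen hU le_rfl).differentiableOn one_ne_zero).differentiableAt
      (hU.mem_nhds hu)).hasDerivAt
  refine convexOn_of_convexOn_Icc_comp_line
    (fun x hx y hy a b ha hb hab i => hUc (hx i) (hy i) ha hb hab) fun x hx y hy => ?_
  set d := y - x
  set A := ∑ i, l i * x i
  set B := ∑ i, l i * d i
  have hmean : ∀ t : ℝ, ∑ i, l i * (x i + t * d i) = A + t * B := fun t => by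
    simp only [A, B, mul_add, sum_add_distrib, mul_sum, mul_left_comm]
  have hz : ∀ t ∈ Icc (0 : ℝ) 1, ∀ i, x i + t * d i ∈ U := fun t ht i => by
    convert hUc (hx i) (hy i) (sub_nonneg.2 ht.2) ht.1 (sub_add_cancel 1 t) using 1
    simp only [d, Pi.sub_apply, smul_eq_mul]; ring
  have hA : ∀ t ∈ Icc (0 : ℝ) 1, A + t * B ∈ U := fun t ht => by
    rw [← hmean]; exact hUc.sum_mem (fun i _ => hl i) hl1 fun i _ => hz t ht i
  -- the factor `1` puts the restriction in the shape of `hasDerivAt_sum_sub_comp_line`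
  have hg : (fun t : ℝ => ∑ i, l i * f ((x + t • d) i) - f (∑ i, l i * (x + t • d) i)) =
      fun t => ∑ i, l i * f (x i + t * d i) - 1 * f (A + t * B) := by
    ext t; simp only [Pi.add_apply, Pi.smul_apply, smul_eq_mul, hmean, one_mul]
  rw [hg]
  refine convexOn_of_hasDerivWithinAt2_nonneg (convex_Icc 0 1)
    (fun t ht => (hasDerivAt_sum_sub_comp_line (fun i => hf' _ (hz t ht i))
      (hf' _ (hA t ht))).continuousAt.continuousWithinAt)
    (fun t ht => (hasDerivAt_sum_sub_comp_line (fun i => hf' _ (hz t (interior_subset ht) i))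
      (hf' _ (hA t (interior_subset ht)))).hasDerivWithinAt)
    (fun t ht => (hasDerivAt_sum_sub_comp_line (fun i => hf'' _ (hz t (interior_subset ht) i))
      (hf'' _ (hA t (interior_subset ht)))).hasDerivWithinAt) fun t ht => ?_
  have key := sq_sum_mul_le_of_concaveOn_one_div hf2 hconc (fun i _ => hl i) hl1
    (d := d) fun i _ => hz t (interior_subset ht) i
  rw [hmean] at key
  simp only [sq, one_mul, ← mul_assoc] at key ⊢
  linarith

theorem stmt_14_general (f : ℝ → ℝ)
    (hsmooth : ContDiffOn ℝ 2 f (Set.Ioi (0:ℝ)))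
    (hf'' : ∀ t ∈ Set.Ioi (0:ℝ), 0 < iteratedDeriv 2 f t)
    (hconc : ConcaveOn ℝ (Set.Ioi (0:ℝ)) (fun t => 1 / iteratedDeriv 2 f t))
    (n : ℕ) (l : Fin n → ℝ) (hl : ∀ i, 0 ≤ l i) (hl1 : ∑ i, l i = 1) :
    ConvexOn ℝ {x : Fin n → ℝ | ∀ i, 0 < x i}
      (fun x => (∑ i, l i * f (x i)) - f (∑ i, l i * x i)) :=
  convexOn_sum_mul_sub_comp_sum_mul isOpen_Ioi hsmooth hf'' hconc hl hl1

/-- Joint convexity lemma: if `f` is convex on `[0,∞)`, twice continuously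
differentiable with `f'' > 0` on `(0,∞)` and `1/f''` is concave there, then for
probability weights `λ_i`, `G(x) = Σ_i λ_i f(x_i) − f(Σ_i λ_i x_i)` is jointly convex
on `(0,∞)^n`. -/
theorem stmt_14 (f : ℝ → ℝ)
    (hconv : ConvexOn ℝ (Set.Ici (0:ℝ)) f)
    (hsmooth : ContDiffOn ℝ 2 f (Set.Ioi (0:ℝ)))
    (hf'' : ∀ t ∈ Set.Ioi (0:ℝ), 0 < iteratedDeriv 2 f t)
    (hconc : ConcaveOn ℝ (Set.Ioi (0:ℝ)) (fun t => 1 / iteratedDeriv 2 f t))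
    (n : ℕ) (l : Fin n → ℝ) (hl : ∀ i, 0 ≤ l i) (hl1 : ∑ i, l i = 1) :
    ConvexOn ℝ {x : Fin n → ℝ | ∀ i, 0 < x i}
      (fun x => (∑ i, l i * f (x i)) - f (∑ i, l i * x i)) :=
  stmt_14_general f hsmooth hf'' hconc n l hl hl1
end

section
/- Data processing for mutual f-information on the first argument: let f be a convex function with f(1)=0, and define I_f(A;B) = min over full-support distributions q_B of Σ_b q(b)[Σ_a p(a) f(p(b|a)/q(b)) − f(p(b)/q(b))]. If C–A–B is a Markov chain on finite sets (p(c,a,b) = p(a)p(c|a)p(b|a)), then I_f(C;B) ≤ I_f(A;B). -/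
open Finset

private lemma jensen_aux {ι : Type*} [Fintype ι] (f : ℝ → ℝ)
    (hconv : ConvexOn ℝ (Set.Ici (0:ℝ)) f)
    (w x : ι → ℝ) (hw : ∀ i, 0 ≤ w i) (hw1 : ∑ i, w i = 1) (hx : ∀ i, 0 ≤ x i) :
    f (∑ i, w i * x i) ≤ ∑ i, w i * f (x i) := by
  simpa [smul_eq_mul] using
    hconv.map_sum_le (fun i _ => hw i) hw1 (fun i _ => hx i)

/-- Data processing for the mutual f-information on the first argument: for a Markov
chain `C–A–B` given by a distribution `pA` on `A` and channels `pc`, `pb`,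
`I_f(C;B) ≤ I_f(A;B)` where
`I_f(X;B) = inf_{q_B > 0} Σ_b q(b)[Σ_x p(x) f(p(b|x)/q(b)) − f(p(b)/q(b))]`. -/
theorem stmt_15 {A B C : Type*} [Fintype A] [Fintype B] [Fintype C]
    (f : ℝ → ℝ) (hconv : ConvexOn ℝ (Set.Ici (0:ℝ)) f) (hf1 : f 1 = 0)
    (pA : A → ℝ) (hpA : ∀ a, 0 < pA a) (hpA1 : ∑ a, pA a = 1)
    (pc : A → C → ℝ) (hpc : ∀ a c, 0 ≤ pc a c) (hpc1 : ∀ a, ∑ c, pc a c = 1)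
    (pb : A → B → ℝ) (hpb : ∀ a b, 0 ≤ pb a b) (hpb1 : ∀ a, ∑ b, pb a b = 1) :
    sInf {x | ∃ q : B → ℝ, (∀ b, 0 < q b) ∧ (∑ b, q b) = 1 ∧
        x = ∑ b, q b *
          ((∑ c, (∑ a, pA a * pc a c) *
              f ((∑ a, pA a * pc a c * pb a b) / (∑ a, pA a * pc a c) / q b)) -
            f ((∑ a, pA a * pb a b) / q b))} ≤
      sInf {x | ∃ q : B → ℝ, (∀ b, 0 < q b) ∧ (∑ b, q b) = 1 ∧
        x = ∑ b, q b *
          ((∑ a, pA a * f (pb a b / q b)) - f ((∑ a, pA a * pb a b) / q b))} := by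
  by_cases hq : ∃ q : B → ℝ, (∀ b, 0 < q b) ∧ (∑ b, q b) = 1
  · -- notation
    set pC : C → ℝ := fun c => ∑ a, pA a * pc a c with hpCdef
    set num : C → B → ℝ := fun c b => ∑ a, pA a * pc a c * pb a b with hnumdef
    have hpCnn : ∀ c, 0 ≤ pC c := fun c =>
      Finset.sum_nonneg fun a _ => mul_nonneg (hpA a).le (hpc a c)
    have hpCzero : ∀ c, pC c = 0 → ∀ a, pc a c = 0 := by
      intro c hc a
      have h := (Finset.sum_eq_zero_iff_of_nonneg
        (fun a _ => mul_nonneg (hpA a).le (hpc a c))).mp hc a (Finset.mem_univ a)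
      have := (hpA a).ne'
      rcases mul_eq_zero.mp h with h' | h'
      · exact absurd h' this
      · exact h'
    have hnumnn : ∀ c b, 0 ≤ num c b := fun c b =>
      Finset.sum_nonneg fun a _ => mul_nonneg (mul_nonneg (hpA a).le (hpc a c)) (hpb a b)
    have hnumzero : ∀ c b, pC c = 0 → num c b = 0 := by
      intro c b hc
      exact Finset.sum_eq_zero fun a _ => by simp [hpCzero c hc a]
    have hnumsum : ∀ b, ∑ c, num c b = ∑ a, pA a * pb a b := by
      intro b
      rw [hnumdef, Finset.sum_comm]
      refine Finset.sum_congr rfl fun a _ => ?_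
      calc ∑ c, pA a * pc a c * pb a b = (∑ c, pc a c) * (pA a * pb a b) := by
            rw [Finset.sum_mul]; exact Finset.sum_congr rfl fun c _ => by ring
        _ = pA a * pb a b := by rw [hpc1, one_mul]
    -- claim 1 : per b, the C-term is ≤ the A-term (Jensen)
    have claim1 : ∀ (q : B → ℝ), (∀ b, 0 < q b) → ∀ b,
        ∑ c, pC c * f (num c b / pC c / q b) ≤ ∑ a, pA a * f (pb a b / q b) := by
      intro q hqpos b
      have hrhs : ∑ a, pA a * f (pb a b / q b)
          = ∑ c, ∑ a, pA a * pc a c * f (pb a b / q b) := by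
        rw [Finset.sum_comm]
        refine Finset.sum_congr rfl fun a _ => Eq.symm ?_
        calc ∑ c, pA a * pc a c * f (pb a b / q b)
            = (∑ c, pc a c) * (pA a * f (pb a b / q b)) := by
              rw [Finset.sum_mul]; exact Finset.sum_congr rfl fun c _ => by ring
          _ = pA a * f (pb a b / q b) := by rw [hpc1, one_mul]
      rw [hrhs]
      refine Finset.sum_le_sum fun c _ => ?_
      rcases eq_or_lt_of_le (hpCnn c) with hc | hc
      · have h1 : pC c = 0 := hc.symm
        rw [h1, zero_mul]
        refine Finset.sum_nonneg fun a _ => by simp [hpCzero c h1 a]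
      · -- Jensen with weights pA a * pc a c / pC c
        have hw : ∀ a, 0 ≤ pA a * pc a c / pC c := fun a =>
          div_nonneg (mul_nonneg (hpA a).le (hpc a c)) (hpCnn c)
        have hw1 : ∑ a, pA a * pc a c / pC c = 1 := by
          rw [← Finset.sum_div, div_eq_one_iff_eq hc.ne']
        have hx : ∀ a, 0 ≤ pb a b / q b := fun a =>
          div_nonneg (hpb a b) (hqpos b).le
        have hJ := jensen_aux f hconv (fun a => pA a * pc a c / pC c)
          (fun a => pb a b / q b) hw hw1 hx
        have hmean : ∑ a, pA a * pc a c / pC c * (pb a b / q b)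
            = num c b / pC c / q b := by
          rw [hnumdef]
          rw [div_div, Finset.sum_div]
          refine Finset.sum_congr rfl fun a _ => ?_
          field_simp
        rw [hmean] at hJ
        calc pC c * f (num c b / pC c / q b)
            ≤ pC c * ∑ a, pA a * pc a c / pC c * f (pb a b / q b) := by
              exact mul_le_mul_of_nonneg_left hJ (hpCnn c)
          _ = ∑ a, pA a * pc a c * f (pb a b / q b) := by
              rw [Finset.mul_sum]
              refine Finset.sum_congr rfl fun a _ => ?_
              field_simp
    -- claim 2 : per b, the C-term is ≥ f(p(b)/q b) (Jensen), for nonnegativity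
    have claim2 : ∀ (q : B → ℝ), (∀ b, 0 < q b) → ∀ b,
        f ((∑ a, pA a * pb a b) / q b) ≤ ∑ c, pC c * f (num c b / pC c / q b) := by
      intro q hqpos b
      have hpC1 : ∑ c, pC c = 1 := by
        rw [hpCdef, Finset.sum_comm]
        calc ∑ a, ∑ c, pA a * pc a c = ∑ a, pA a * ∑ c, pc a c := by
              exact Finset.sum_congr rfl fun a _ => by rw [Finset.mul_sum]
          _ = 1 := by simp [hpc1, hpA1]
      have hx : ∀ c, 0 ≤ num c b / pC c / q b := fun c =>
        div_nonneg (div_nonneg (hnumnn c b) (hpCnn c)) (hqpos b).le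
      have hJ := jensen_aux f hconv pC (fun c => num c b / pC c / q b)
        hpCnn hpC1 hx
      have hmean : ∑ c, pC c * (num c b / pC c / q b)
          = (∑ a, pA a * pb a b) / q b := by
        rw [← hnumsum b, Finset.sum_div]
        refine Finset.sum_congr rfl fun c _ => ?_
        rcases eq_or_lt_of_le (hpCnn c) with hc | hc
        · rw [← hc, zero_mul, hnumzero c b hc.symm, zero_div]
        · rw [div_div, ← mul_div_assoc]
          exact mul_div_mul_left _ _ hc.ne'
      rw [hmean] at hJ
      exact hJ
    -- lower bound 0 for the LHS set
    have hbdd : BddBelow {x | ∃ q : B → ℝ, (∀ b, 0 < q b) ∧ (∑ b, q b) = 1 ∧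
        x = ∑ b, q b *
          ((∑ c, (∑ a, pA a * pc a c) *
              f ((∑ a, pA a * pc a c * pb a b) / (∑ a, pA a * pc a c) / q b)) -
            f ((∑ a, pA a * pb a b) / q b))} := by
      refine ⟨0, fun z hz => ?_⟩
      obtain ⟨q, hqpos, hq1, rfl⟩ := hz
      refine Finset.sum_nonneg fun b _ => ?_
      refine mul_nonneg (hqpos b).le ?_
      have := claim2 q hqpos b
      simpa [hpCdef, hnumdef] using sub_nonneg.mpr this
    obtain ⟨q0, hq0pos, hq01⟩ := hq
    refine le_csInf ⟨_, ⟨q0, hq0pos, hq01, rfl⟩⟩ ?_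
    rintro x ⟨q, hqpos, hq1, rfl⟩
    refine le_trans (csInf_le hbdd ⟨q, hqpos, hq1, rfl⟩) ?_
    refine Finset.sum_le_sum fun b _ => ?_
    refine mul_le_mul_of_nonneg_left ?_ (hqpos b).le
    refine sub_le_sub_right ?_ _
    simpa [hpCdef, hnumdef] using claim1 q hqpos b
  · -- both sets are empty
    have h1 : {x | ∃ q : B → ℝ, (∀ b, 0 < q b) ∧ (∑ b, q b) = 1 ∧
        x = ∑ b, q b *
          ((∑ c, (∑ a, pA a * pc a c) *
              f ((∑ a, pA a * pc a c * pb a b) / (∑ a, pA a * pc a c) / q b)) -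
            f ((∑ a, pA a * pb a b) / q b))} = ∅ := by
      ext x; simp only [Set.mem_setOf_eq, Set.mem_empty_iff_false, iff_false]
      rintro ⟨q, h1, h2, _⟩; exact hq ⟨q, h1, h2⟩
    have h2 : {x | ∃ q : B → ℝ, (∀ b, 0 < q b) ∧ (∑ b, q b) = 1 ∧
        x = ∑ b, q b *
          ((∑ a, pA a * f (pb a b / q b)) - f ((∑ a, pA a * pb a b) / q b))} = ∅ := by
      ext x; simp only [Set.mem_setOf_eq, Set.mem_empty_iff_false, iff_false]
      rintro ⟨q, h1, h2, _⟩; exact hq ⟨q, h1, h2⟩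
    rw [h1, h2]
end

section
/- Semantic security bound: let p_{B|A} be a channel from a finite set A to a finite set B, let p* be any fixed reference input distribution on A of full support with output p*(b) = Σ_a p*(a)p(b|a), and define V_∞(A;B) = Σ_b max_{a: p*(a)>0} |p(b|a) − p*(b)|. Then for any input distribution q_A on A with induced joint q(a,b) = q(a)p(b|a) and output q(b) = Σ_a q(a)p(b|a), the Shannon mutual information satisfies I(A;B)_q ≤ 2·log₂(e)·V_∞(A;B) = 2·log₂(e)·Σ_b max_{a} |p(b|a) − p*(b)|. -/
open Finset

/-- Semantic security bound: for a channel `W : A → B`, a full-support reference input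
`p*` with output `p*(b) = Σ_a p*(a)W(b|a)`, and any input distribution `q`,
`I(A;B)_q ≤ 2·log₂(e)·V_∞(A;B)` where `V_∞(A;B) = Σ_b max_a |W(b|a) − p*(b)|`. -/
theorem stmt_17 {A B : Type*} [Fintype A] [Fintype B] [Nonempty A]
    (W : A → B → ℝ) (hW : ∀ a b, 0 ≤ W a b) (hW1 : ∀ a, ∑ b, W a b = 1)
    (pstar : A → ℝ) (hps : ∀ a, 0 < pstar a) (hps1 : ∑ a, pstar a = 1)
    (q : A → ℝ) (hq : ∀ a, 0 ≤ q a) (hq1 : ∑ a, q a = 1) :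
    (∑ a, ∑ b, q a * W a b * Real.logb 2 (W a b / (∑ a', q a' * W a' b))) ≤
      2 * Real.logb 2 (Real.exp 1) *
        ∑ b, ⨆ a, |W a b - ∑ a', pstar a' * W a' b| := by
  set pb : B → ℝ := fun b => ∑ a', pstar a' * W a' b with hpb
  set qb : B → ℝ := fun b => ∑ a', q a' * W a' b with hqb
  set M : B → ℝ := fun b => ⨆ a, |W a b - pb b| with hM
  have hlog2 : (0:ℝ) < Real.log 2 := Real.log_pos (by norm_num)
  have hlogbE : Real.logb 2 (Real.exp 1) = 1 / Real.log 2 := by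
    rw [Real.logb, Real.log_exp]
  have hlogbEpos : 0 < Real.logb 2 (Real.exp 1) := by
    rw [hlogbE]; positivity
  have hMle : ∀ a b, |W a b - pb b| ≤ M b := fun a b =>
    le_ciSup (f := fun a => |W a b - pb b|)
      (Set.Finite.bddAbove (Set.finite_range _)) a
  have hM0 : ∀ b, 0 ≤ M b := fun b =>
    le_trans (abs_nonneg _) (hMle (Classical.arbitrary A) b)
  have hqb0 : ∀ b, 0 ≤ qb b := fun b =>
    Finset.sum_nonneg fun a _ => mul_nonneg (hq a) (hW a b)
  have hqbM : ∀ b, |qb b - pb b| ≤ M b := by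
    intro b
    have h1 : qb b - pb b = ∑ a, q a * (W a b - pb b) := by
      simp only [mul_sub]
      rw [Finset.sum_sub_distrib, ← Finset.sum_mul, hq1, one_mul]
    rw [h1]
    calc |∑ a, q a * (W a b - pb b)| ≤ ∑ a, |q a * (W a b - pb b)| :=
          Finset.abs_sum_le_sum_abs _ _
      _ ≤ ∑ a, q a * M b := by
          apply Finset.sum_le_sum
          intro a _
          rw [abs_mul, abs_of_nonneg (hq a)]
          exact mul_le_mul_of_nonneg_left (hMle a b) (hq a)
      _ = M b := by rw [← Finset.sum_mul, hq1, one_mul]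
  have hWqb : ∀ a b, |W a b - qb b| ≤ 2 * M b := by
    intro a b
    calc |W a b - qb b| = |(W a b - pb b) + (pb b - qb b)| := by ring_nf
      _ ≤ |W a b - pb b| + |pb b - qb b| := abs_add_le _ _
      _ ≤ M b + M b := by
          refine add_le_add (hMle a b) ?_
          rw [abs_sub_comm]; exact hqbM b
      _ = 2 * M b := by ring
  rw [Finset.sum_comm, mul_comm (2 * Real.logb 2 (Real.exp 1)), Finset.sum_mul]
  apply Finset.sum_le_sum
  intro b _
  rcases eq_or_lt_of_le (hqb0 b) with h0 | hpos
  · -- qb b = 0 : each term vanishes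
    have hz : ∀ a ∈ Finset.univ, q a * W a b = 0 := by
      rw [← Finset.sum_eq_zero_iff_of_nonneg
        (fun a _ => mul_nonneg (hq a) (hW a b))]
      exact h0.symm
    have : ∀ a ∈ (Finset.univ : Finset A),
        q a * W a b * Real.logb 2 (W a b / qb b) = 0 := by
      intro a ha; rw [hz a ha, zero_mul]
    rw [Finset.sum_congr rfl this, Finset.sum_const, smul_zero]
    exact mul_nonneg (hM0 b) (by positivity)
  · -- qb b > 0
    have key : ∀ a, q a * W a b * Real.logb 2 (W a b / qb b) ≤
        q a * W a b * (2 * M b / qb b * Real.logb 2 (Real.exp 1)) := by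
      intro a
      rcases eq_or_lt_of_le (mul_nonneg (hq a) (hW a b)) with hz | hpos'
      · rw [← hz]; simp
      · apply mul_le_mul_of_nonneg_left _ (le_of_lt hpos')
        have hWab : 0 < W a b :=
          lt_of_le_of_ne (hW a b) (by rintro h; rw [← h] at hpos'; simp at hpos')
        have hratio : 0 < W a b / qb b := div_pos hWab hpos
        have h1 : Real.log (W a b / qb b) ≤ W a b / qb b - 1 :=
          Real.log_le_sub_one_of_pos hratio
        have h2 : W a b / qb b - 1 ≤ |W a b - qb b| / qb b := by
          rw [div_sub_one hpos.ne']
          gcongr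
          exact le_abs_self _
        have h3 : |W a b - qb b| / qb b ≤ 2 * M b / qb b := by
          gcongr
          exact hWqb a b
        have h4 : Real.log (W a b / qb b) ≤ 2 * M b / qb b := by linarith
        rw [Real.logb, hlogbE]
        calc Real.log (W a b / qb b) / Real.log 2
            ≤ (2 * M b / qb b) / Real.log 2 := by gcongr
          _ = 2 * M b / qb b * (1 / Real.log 2) := by ring
    calc ∑ a, q a * W a b * Real.logb 2 (W a b / qb b)
        ≤ ∑ a, q a * W a b * (2 * M b / qb b * Real.logb 2 (Real.exp 1)) :=
          Finset.sum_le_sum fun a _ => key a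
      _ = qb b * (2 * M b / qb b * Real.logb 2 (Real.exp 1)) := by
          rw [← Finset.sum_mul]
      _ = M b * (2 * Real.logb 2 (Real.exp 1)) := by
          field_simp
end
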